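/- arXiv:1501.00793 — 7 statements merged into one kernel-verified Lean document; each statement's English description precedes it below -/
import Mathlib

section
/- Let k be a real number with k ≠ 0, k ≠ 1 and k ≠ -1/2, and let λ₁,λ₂,λ₃,λ₄ and λ̄₁,λ̄₂,λ̄₃,λ̄₄ be positive reals. For t ≥ 0 define A(t)=λ₁, B(t)=λ₂, C(t)=λ₃, D(t)=λ₄+4(k²+k+1)t and Ā(t)=λ̄₁, B̄(t)=λ̄₂, C̄(t)=λ̄₃, D̄(t)=λ̄₄+4(k²+k+1)t. Then ((A-Ā)/A)² + ((B-B̄)/B)² + ((C-C̄)/C)² + ((D-D̄)/D)² tends to 0 as t → ∞ if and only if λ̄₁=λ₁, λ̄₂=λ₂ and λ̄₃=λ₃ (with λ̄₄ arbitrary); in particular the quasi-convergence class [g]_α of such a metric is exactly a 1-parameter family. -/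
/-! The first three relative errors do not depend on `t`, while the fourth is
`(λ₄ - λ̄₄) / D(t)` with `D` growing linearly (`k² + k + 1 > 0` for every real `k`). So the sum
converges to the constant sum of the first three squares, which vanishes exactly when the
first three initial data agree. -/

open Filter Topology

theorem sq_add_sq_add_sq_eq_zero_iff {R : Type*} [Ring R] [LinearOrder R] [IsStrictOrderedRing R]
    {x y z : R} : x ^ 2 + y ^ 2 + z ^ 2 = 0 ↔ x = 0 ∧ y = 0 ∧ z = 0 := by
  rw [add_eq_zero_iff_of_nonneg (by positivity) (sq_nonneg z),
    add_eq_zero_iff_of_nonneg (sq_nonneg x) (sq_nonneg y)]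
  simp only [sq_eq_zero_iff, and_assoc]

theorem sub_div_self_eq_zero_iff {K : Type*} [Field K] {a b : K} (ha : a ≠ 0) :
    (a - b) / a = 0 ↔ b = a := by
  rw [div_eq_zero_iff, or_iff_left ha, sub_eq_zero, eq_comm]

theorem tendsto_sq_sub_div_of_sub_eq_const {α : Type*} {l : Filter α} {f g : α → ℝ} {d : ℝ}
    (hf : Tendsto f l atTop) (hfg : ∀ t, f t - g t = d) :
    Tendsto (fun t => ((f t - g t) / f t) ^ 2) l (𝓝 0) := by
  simpa [hfg] using ((tendsto_const_nhds (x := d)).div_atTop hf).pow 2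

theorem stmt_0_general (k : ℝ)
    (l1 l2 l3 l4 m1 m2 m3 m4 : ℝ)
    (hl1 : 0 < l1) (hl2 : 0 < l2) (hl3 : 0 < l3)
    (A B C D Ab Bb Cb Db : ℝ → ℝ)
    (hA : ∀ t : ℝ, A t = l1) (hB : ∀ t : ℝ, B t = l2)
    (hC : ∀ t : ℝ, C t = l3) (hD : ∀ t : ℝ, D t = l4 + 4 * (k ^ 2 + k + 1) * t)
    (hAb : ∀ t : ℝ, Ab t = m1) (hBb : ∀ t : ℝ, Bb t = m2)
    (hCb : ∀ t : ℝ, Cb t = m3) (hDb : ∀ t : ℝ, Db t = m4 + 4 * (k ^ 2 + k + 1) * t) :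
    Filter.Tendsto (fun t : ℝ =>
        ((A t - Ab t) / A t) ^ 2 + ((B t - Bb t) / B t) ^ 2 +
        ((C t - Cb t) / C t) ^ 2 + ((D t - Db t) / D t) ^ 2)
      Filter.atTop (nhds 0) ↔ (m1 = l1 ∧ m2 = l2 ∧ m3 = l3) := by
  have hspeed : 0 < 4 * (k ^ 2 + k + 1) := by nlinarith [sq_nonneg (k + 1 / 2)]
  have hD_top : Tendsto D atTop atTop := by
    rw [funext hD]
    exact tendsto_atTop_add_const_left _ _ (tendsto_id.const_mul_atTop hspeed)
  set c := ((l1 - m1) / l1) ^ 2 + ((l2 - m2) / l2) ^ 2 + ((l3 - m3) / l3) ^ 2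
  have hlim : Tendsto (fun t => ((A t - Ab t) / A t) ^ 2 + ((B t - Bb t) / B t) ^ 2 +
      ((C t - Cb t) / C t) ^ 2 + ((D t - Db t) / D t) ^ 2) atTop (𝓝 c) := by
    simpa [hA, hB, hC, hAb, hBb, hCb] using (tendsto_const_nhds (x := c)).add
      (tendsto_sq_sub_div_of_sub_eq_const hD_top (d := l4 - m4) fun t => by rw [hD, hDb]; ring)
  calc _ ↔ c = 0 := ⟨tendsto_nhds_unique hlim, fun hc => hc ▸ hlim⟩
    _ ↔ _ := by
      rw [sq_add_sq_add_sq_eq_zero_iff, sub_div_self_eq_zero_iff hl1.ne',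
        sub_div_self_eq_zero_iff hl2.ne', sub_div_self_eq_zero_iff hl3.ne']

/-- class A2iv: quasi-convergence of diagonal metrics in the same
frame is equivalent to matching of the first three initial data; `[g]_α` is a
1-parameter family. -/
theorem stmt_0 (k : ℝ) (hk0 : k ≠ 0) (hk1 : k ≠ 1) (hk2 : k ≠ -(1/2))
    (l1 l2 l3 l4 m1 m2 m3 m4 : ℝ)
    (hl1 : 0 < l1) (hl2 : 0 < l2) (hl3 : 0 < l3) (hl4 : 0 < l4)
    (hm1 : 0 < m1) (hm2 : 0 < m2) (hm3 : 0 < m3) (hm4 : 0 < m4)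
    (A B C D Ab Bb Cb Db : ℝ → ℝ)
    (hA : ∀ t : ℝ, A t = l1) (hB : ∀ t : ℝ, B t = l2)
    (hC : ∀ t : ℝ, C t = l3) (hD : ∀ t : ℝ, D t = l4 + 4 * (k ^ 2 + k + 1) * t)
    (hAb : ∀ t : ℝ, Ab t = m1) (hBb : ∀ t : ℝ, Bb t = m2)
    (hCb : ∀ t : ℝ, Cb t = m3) (hDb : ∀ t : ℝ, Db t = m4 + 4 * (k ^ 2 + k + 1) * t) :
    Filter.Tendsto (fun t : ℝ =>
        ((A t - Ab t) / A t) ^ 2 + ((B t - Bb t) / B t) ^ 2 +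
        ((C t - Cb t) / C t) ^ 2 + ((D t - Db t) / D t) ^ 2)
      Filter.atTop (nhds 0) ↔ (m1 = l1 ∧ m2 = l2 ∧ m3 = l3) :=
  stmt_0_general k l1 l2 l3 l4 m1 m2 m3 m4 hl1 hl2 hl3 A B C D Ab Bb Cb Db hA hB hC hD hAb hBb hCb
    hDb
end

section
/- Let k be a real number with k ≠ 0, k ≠ 1 and k ≠ -1/2, let λ₁,λ₂,λ₃,λ₄ and λ̄₁,λ̄₂,λ̄₃,λ̄₄ be positive reals, and let a,b,c be arbitrary real numbers. For t ≥ 0 define A(t)=λ₁, B(t)=λ₂, C(t)=λ₃, D(t)=λ₄+4(k²+k+1)t and Ā(t)=λ̄₁, B̄(t)=λ̄₂, C̄(t)=λ̄₃, D̄(t)=λ̄₄+4(k²+k+1)t. Then the quantity ((A-Ā)/A)² + ((B-B̄)/B)² + ((C-C̄)/C)² + 2(Āa)²/(AD) + 2(B̄b)²/(BD) + 2(C̄c)²/(CD) + ((a²Ā+b²B̄+c²C̄+D̄-D)/D)² tends to 0 as t → ∞ if and only if λ̄₁=λ₁, λ̄₂=λ₂ and λ̄₃=λ₃ (with λ̄₄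 arbitrary); in particular the quasi-convergence class [g] is exactly a 1-parameter family. -/
/-!
Along both flows the first three components are constant while `D` grows linearly with the
positive slope `4(k² + k + 1)`. Hence every term of `|ḡ - g|²_g` involving `a`, `b`, `c` or
`D̄ - D = λ̄₄ - λ₄` decays like `1 / t`, and the quantity tends to the constant
`Σᵢ ((λᵢ - λ̄ᵢ) / λᵢ)²`, which vanishes exactly when `λ̄ᵢ = λᵢ` for `i = 1, 2, 3`.
-/

open Filter Topology

lemma tendsto_nhds_zero_iff_of_eq_const_add {α : Type*} {l : Filter α} [l.NeBot]
    {f g : α → ℝ} {K : ℝ} (hfg : ∀ x, f x = K + g x) (hg : Tendsto g l (𝓝 0)) :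
    Tendsto f l (𝓝 0) ↔ K = 0 := by
  have hK : Tendsto f l (𝓝 K) := by
    simpa [funext hfg] using (tendsto_const_nhds (x := K)).add hg
  exact ⟨fun h => tendsto_nhds_unique hK h, fun h => h ▸ hK⟩

lemma sq_div_sub_add_sq_div_sub_add_sq_div_sub_eq_zero_iff {l1 l2 l3 : ℝ}
    (hl1 : l1 ≠ 0) (hl2 : l2 ≠ 0) (hl3 : l3 ≠ 0) (m1 m2 m3 : ℝ) :
    ((l1 - m1) / l1) ^ 2 + ((l2 - m2) / l2) ^ 2 + ((l3 - m3) / l3) ^ 2 = 0 ↔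
      m1 = l1 ∧ m2 = l2 ∧ m3 = l3 := by
  rw [add_eq_zero_iff_of_nonneg (by positivity) (by positivity),
    add_eq_zero_iff_of_nonneg (by positivity) (by positivity)]
  simp [div_eq_zero_iff, sub_eq_zero, hl1, hl2, hl3, eq_comm, and_assoc]

lemma tendsto_const_div_mul_atTop {α : Type*} {l : Filter α} {D : α → ℝ}
    (hD : Tendsto D l atTop) (q : ℝ) {p : ℝ} (hp : 0 < p) :
    Tendsto (fun x => q / (p * D x)) l (𝓝 0) :=
  tendsto_const_nhds.div_atTop (hD.const_mul_atTop hp)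

lemma tendsto_affine_atTop {c : ℝ} (hc : 0 < c) (d : ℝ) :
    Tendsto (fun t : ℝ => d + c * t) atTop atTop :=
  tendsto_atTop_add_const_left _ _ (tendsto_id.const_mul_atTop hc)

lemma sq_add_self_add_one_pos (k : ℝ) : 0 < k ^ 2 + k + 1 := by
  nlinarith [sq_nonneg (k + 1 / 2)]

theorem stmt_1_general (k : ℝ)
    (l1 l2 l3 l4 m1 m2 m3 m4 a b c : ℝ)
    (hl1 : 0 < l1) (hl2 : 0 < l2) (hl3 : 0 < l3)
    (A B C D Ab Bb Cb Db : ℝ → ℝ)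
    (hA : ∀ t : ℝ, A t = l1) (hB : ∀ t : ℝ, B t = l2)
    (hC : ∀ t : ℝ, C t = l3) (hD : ∀ t : ℝ, D t = l4 + 4 * (k ^ 2 + k + 1) * t)
    (hAb : ∀ t : ℝ, Ab t = m1) (hBb : ∀ t : ℝ, Bb t = m2)
    (hCb : ∀ t : ℝ, Cb t = m3) (hDb : ∀ t : ℝ, Db t = m4 + 4 * (k ^ 2 + k + 1) * t) :
    Filter.Tendsto (fun t : ℝ =>
        ((A t - Ab t) / A t) ^ 2 + ((B t - Bb t) / B t) ^ 2 +
        ((C t - Cb t) / C t) ^ 2 +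
        2 * (Ab t * a) ^ 2 / (A t * D t) +
        2 * (Bb t * b) ^ 2 / (B t * D t) +
        2 * (Cb t * c) ^ 2 / (C t * D t) +
        ((a ^ 2 * Ab t + b ^ 2 * Bb t + c ^ 2 * Cb t + Db t - D t) / D t) ^ 2)
      Filter.atTop (nhds 0) ↔ (m1 = l1 ∧ m2 = l2 ∧ m3 = l3) := by
  have hD_atTop : Tendsto D atTop atTop := by
    simpa only [← funext hD] using
      tendsto_affine_atTop (mul_pos four_pos (sq_add_self_add_one_pos k)) l4
  have hvanish : Tendsto (fun t => 2 * (m1 * a) ^ 2 / (l1 * D t) +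
      2 * (m2 * b) ^ 2 / (l2 * D t) + 2 * (m3 * c) ^ 2 / (l3 * D t) +
      ((a ^ 2 * m1 + b ^ 2 * m2 + c ^ 2 * m3 + m4 - l4) / D t) ^ 2) atTop (𝓝 0) := by
    simpa using (((tendsto_const_div_mul_atTop hD_atTop _ hl1).add
      (tendsto_const_div_mul_atTop hD_atTop _ hl2)).add
      (tendsto_const_div_mul_atTop hD_atTop _ hl3)).add
      ((tendsto_const_nhds.div_atTop hD_atTop).pow 2)
  rw [tendsto_nhds_zero_iff_of_eq_const_add (fun t => ?_) hvanish,
    sq_div_sub_add_sq_div_sub_add_sq_div_sub_eq_zero_iff hl1.ne' hl2.ne' hl3.ne']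
  rw [hA, hB, hC, hAb, hBb, hCb, hDb, hD]
  ring

/-- class A2iv, different frames: quasi-convergence is equivalent
to matching of the first three initial data; `[g]` is a 1-parameter family. -/
theorem stmt_1 (k : ℝ) (hk0 : k ≠ 0) (hk1 : k ≠ 1) (hk2 : k ≠ -(1/2))
    (l1 l2 l3 l4 m1 m2 m3 m4 a b c : ℝ)
    (hl1 : 0 < l1) (hl2 : 0 < l2) (hl3 : 0 < l3) (hl4 : 0 < l4)
    (hm1 : 0 < m1) (hm2 : 0 < m2) (hm3 : 0 < m3) (hm4 : 0 < m4)
    (A B C D Ab Bb Cb Db : ℝ → ℝ)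
    (hA : ∀ t : ℝ, A t = l1) (hB : ∀ t : ℝ, B t = l2)
    (hC : ∀ t : ℝ, C t = l3) (hD : ∀ t : ℝ, D t = l4 + 4 * (k ^ 2 + k + 1) * t)
    (hAb : ∀ t : ℝ, Ab t = m1) (hBb : ∀ t : ℝ, Bb t = m2)
    (hCb : ∀ t : ℝ, Cb t = m3) (hDb : ∀ t : ℝ, Db t = m4 + 4 * (k ^ 2 + k + 1) * t) :
    Filter.Tendsto (fun t : ℝ =>
        ((A t - Ab t) / A t) ^ 2 + ((B t - Bb t) / B t) ^ 2 +
        ((C t - Cb t) / C t) ^ 2 +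
        2 * (Ab t * a) ^ 2 / (A t * D t) +
        2 * (Bb t * b) ^ 2 / (B t * D t) +
        2 * (Cb t * c) ^ 2 / (C t * D t) +
        ((a ^ 2 * Ab t + b ^ 2 * Bb t + c ^ 2 * Cb t + Db t - D t) / D t) ^ 2)
      Filter.atTop (nhds 0) ↔ (m1 = l1 ∧ m2 = l2 ∧ m3 = l3) :=
  stmt_1_general k l1 l2 l3 l4 m1 m2 m3 m4 a b c hl1 hl2 hl3 A B C D Ab Bb Cb Db hA hB hC hD hAb hBb
    hCb hDb
end

section
/- Let k ≠ 0 be real and let λ₁,λ₂,λ₃,λ₄ and λ̄₁,λ̄₂,λ̄₃,λ̄₄ be positive reals. Suppose A,B,C,D : [0,∞) → (0,∞) are differentiable and satisfy dA/dt = -(A²-B²)/(BD), dB/dt = -(B²-A²)/(AD), dC/dt = 0, dD/dt = ((A-B)² + 12k²AB)/(AB) with A(0)=λ₁, B(0)=λ₂, C(0)=λ₃, D(0)=λ₄, and suppose (as holds for these solutions) that A(t) → √(λ₁λ₂) and B(t) → √(λ₁λ₂) as t → ∞. Let Ā,B̄,C̄,D̄ satisfy the same ODE system with initial data λ̄₁,λ̄₂,λ̄₃,λ̄₄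 and with Ā(t) → √(λ̄₁λ̄₂), B̄(t) → √(λ̄₁λ̄₂). Then ((A-Ā)/A)² + ((B-B̄)/B)² + ((C-C̄)/C)² + ((D-D̄)/D)² tends to 0 as t → ∞ if and only if λ̄₁λ̄₂ = λ₁λ₂ and λ̄₃ = λ₃ (with λ̄₄ arbitrary); in particular the quasi-convergence class [g]_α is exactly a 2-parameter family. -/
/-!
The scale factor `C` is constant, so its relative difference is the constant `(λ₃ - λ̄₃)/λ₃`, and
those of `A` and `B` tend to `(√(λ₁λ₂) - √(λ̄₁λ̄₂))/√(λ₁λ₂)`. For `D`, both right-hand sides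
`D'` and `D̄'` tend to `12k² ≠ 0`: by the mean value theorem `D - D̄ = o(t)` while `D ~ 12k² t`,
so the relative difference of `D` always tends to `0`. The quantity therefore tends to a sum of
squares, which vanishes exactly when `λ̄₁λ̄₂ = λ₁λ₂` and `λ̄₃ = λ₃`.
-/

open Filter Set Topology Asymptotics

section GrowthFromDerivative

variable {E : Type*} [NormedAddCommGroup E] [NormedSpace ℝ E]

theorem eventually_hasDerivAt_of_hasDerivWithinAt_Ici {f f' : ℝ → E} {a : ℝ}
    (hf : ∀ t ∈ Ici a, HasDerivWithinAt f (f' t) (Ici a) t) :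
    ∀ᶠ t in atTop, HasDerivAt f (f' t) t := by
  filter_upwards [eventually_gt_atTop a] with t ht
  exact (hf t ht.le).hasDerivAt (Ici_mem_nhds ht)

theorem eq_of_hasDerivWithinAt_Ici_zero {f : ℝ → E} {a : ℝ}
    (hf : ∀ t ∈ Ici a, HasDerivWithinAt f 0 (Ici a) t) {t : ℝ} (ht : t ∈ Ici a) :
    f t = f a := by
  have := (convex_Ici a).norm_image_sub_le_of_norm_hasDerivWithin_le hf
    (fun _ _ => norm_zero.le) self_mem_Ici ht
  simpa [sub_eq_zero] using this

theorem isLittleO_id_of_tendsto_deriv_zero {f f' : ℝ → E}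
    (hf : ∀ᶠ t in atTop, HasDerivAt f (f' t) t) (hf' : Tendsto f' atTop (𝓝 0)) :
    f =o[atTop] id := by
  rw [isLittleO_iff]
  intro ε hε
  obtain ⟨T, hT⟩ := eventually_atTop.mp
    ((hf.and ((tendsto_zero_iff_norm_tendsto_zero.mp hf').eventually_le_const
      (half_pos hε))).and (eventually_ge_atTop 0))
  have hmvt : ∀ t ∈ Ici T, ‖f t - f T‖ ≤ ε / 2 * ‖t - T‖ :=
    fun t ht => (convex_Ici T).norm_image_sub_le_of_norm_hasDerivWithin_le
      (fun s hs => (hT s hs).1.1.hasDerivWithinAt) (fun s hs => (hT s hs).1.2) self_mem_Ici ht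
  filter_upwards [eventually_ge_atTop T, eventually_ge_atTop (2 * ‖f T‖ / ε)] with t hTt hft
  have hT0 : 0 ≤ T := (hT T le_rfl).2
  rw [id, Real.norm_eq_abs, abs_of_nonneg (hT0.trans hTt)]
  have hmvt_t := hmvt t hTt
  rw [Real.norm_eq_abs, abs_of_nonneg (sub_nonneg.mpr hTt)] at hmvt_t
  have hfT : 2 * ‖f T‖ ≤ ε * t := by rwa [div_le_iff₀' hε] at hft
  calc ‖f t‖ ≤ ‖f T‖ + ‖f t - f T‖ := norm_le_norm_add_norm_sub' (f t) (f T)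
    _ ≤ ε * t := by nlinarith

theorem isEquivalent_const_mul_of_tendsto_deriv {f f' : ℝ → ℝ} {c : ℝ} (hc : c ≠ 0)
    (hf : ∀ᶠ t in atTop, HasDerivAt f (f' t) t) (hf' : Tendsto f' atTop (𝓝 c)) :
    f ~[atTop] fun t => c * t := by
  have hsub : ∀ᶠ t in atTop, HasDerivAt (fun s => f s - c * s) (f' t - c) t :=
    hf.mono fun t ht => ht.sub (hasDerivAt_const_mul c)
  exact (isLittleO_id_of_tendsto_deriv_zero hsub (by simpa using hf'.sub_const c)).trans_isBigO
    (isBigO_self_const_mul hc id atTop)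

theorem tendsto_sub_div_zero_of_tendsto_deriv {f g f' g' : ℝ → ℝ} {c : ℝ} (hc : c ≠ 0)
    (hf : ∀ᶠ t in atTop, HasDerivAt f (f' t) t) (hg : ∀ᶠ t in atTop, HasDerivAt g (g' t) t)
    (hf' : Tendsto f' atTop (𝓝 c)) (hg' : Tendsto g' atTop (𝓝 c)) :
    Tendsto (fun t => (f t - g t) / f t) atTop (𝓝 0) := by
  have hsub : (fun t => f t - g t) =o[atTop] id :=
    isLittleO_id_of_tendsto_deriv_zero ((hf.and hg).mono fun t h => h.1.sub h.2)
      (by simpa using hf'.sub hg')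
  have hid : id =O[atTop] f := (isBigO_self_const_mul hc id atTop).trans
    (isEquivalent_const_mul_of_tendsto_deriv hc hf hf').isBigO_symm
  exact (hsub.trans_isBigO hid).tendsto_div_nhds_zero

end GrowthFromDerivative

theorem tendsto_A3_rhsD {α : Type*} {l : Filter α} {A B : α → ℝ} {L : ℝ} (k : ℝ) (hL : L ≠ 0)
    (hA : Tendsto A l (𝓝 L)) (hB : Tendsto B l (𝓝 L)) :
    Tendsto (fun t => ((A t - B t) ^ 2 + 12 * k ^ 2 * A t * B t) / (A t * B t)) l
      (𝓝 (12 * k ^ 2)) := by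
  have := (((hA.sub hB).pow 2).add (((tendsto_const_nhds (x := 12 * k ^ 2)).mul hA).mul hB)).div
    (hA.mul hB) (mul_ne_zero hL hL)
  rwa [show ((L - L) ^ 2 + 12 * k ^ 2 * L * L) / (L * L) = 12 * k ^ 2 by field_simp; ring]
    at this

theorem stmt_2_general (k : ℝ) (hk : k ≠ 0)
    (l1 l2 l3 m1 m2 m3 : ℝ)
    (hl1 : 0 < l1) (hl2 : 0 < l2) (hl3 : 0 < l3)
    (hm1 : 0 < m1) (hm2 : 0 < m2)
    (A B C D Ab Bb Cb Db : ℝ → ℝ)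
    (hC : ∀ t ∈ Set.Ici (0:ℝ), HasDerivWithinAt C 0 (Set.Ici 0) t)
    (hD : ∀ t ∈ Set.Ici (0:ℝ),
      HasDerivWithinAt D (((A t - B t) ^ 2 + 12 * k ^ 2 * A t * B t) / (A t * B t))
        (Set.Ici 0) t)
    (hC0 : C 0 = l3)
    (hAlim : Filter.Tendsto A Filter.atTop (nhds (Real.sqrt (l1 * l2))))
    (hBlim : Filter.Tendsto B Filter.atTop (nhds (Real.sqrt (l1 * l2))))
    (hCb : ∀ t ∈ Set.Ici (0:ℝ), HasDerivWithinAt Cb 0 (Set.Ici 0) t)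
    (hDb : ∀ t ∈ Set.Ici (0:ℝ),
      HasDerivWithinAt Db (((Ab t - Bb t) ^ 2 + 12 * k ^ 2 * Ab t * Bb t) / (Ab t * Bb t))
        (Set.Ici 0) t)
    (hCb0 : Cb 0 = m3)
    (hAblim : Filter.Tendsto Ab Filter.atTop (nhds (Real.sqrt (m1 * m2))))
    (hBblim : Filter.Tendsto Bb Filter.atTop (nhds (Real.sqrt (m1 * m2)))) :
    Filter.Tendsto (fun t : ℝ =>
        ((A t - Ab t) / A t) ^ 2 + ((B t - Bb t) / B t) ^ 2 +
        ((C t - Cb t) / C t) ^ 2 + ((D t - Db t) / D t) ^ 2)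
      Filter.atTop (nhds 0) ↔ (m1 * m2 = l1 * l2 ∧ m3 = l3) := by
  set L := Real.sqrt (l1 * l2)
  set M := Real.sqrt (m1 * m2)
  have hL : L ≠ 0 := (Real.sqrt_pos.2 (by positivity)).ne'
  have hM : M ≠ 0 := (Real.sqrt_pos.2 (by positivity)).ne'
  have hCrel : Tendsto (fun t => (C t - Cb t) / C t) atTop (𝓝 ((l3 - m3) / l3)) := by
    refine tendsto_const_nhds.congr' ?_
    filter_upwards [eventually_ge_atTop 0] with t ht
    rw [eq_of_hasDerivWithinAt_Ici_zero hC ht, eq_of_hasDerivWithinAt_Ici_zero hCb ht, hC0, hCb0]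
  have hDrel : Tendsto (fun t => (D t - Db t) / D t) atTop (𝓝 0) :=
    tendsto_sub_div_zero_of_tendsto_deriv (by positivity)
      (eventually_hasDerivAt_of_hasDerivWithinAt_Ici hD)
      (eventually_hasDerivAt_of_hasDerivWithinAt_Ici hDb)
      (tendsto_A3_rhsD k hL hAlim hBlim) (tendsto_A3_rhsD k hM hAblim hBblim)
  have hlim := (((((hAlim.sub hAblim).div hAlim hL).pow 2).add
    (((hBlim.sub hBblim).div hBlim hL).pow 2)).add (hCrel.pow 2)).add (hDrel.pow 2)
  constructor
  · intro h
    have h0 := tendsto_nhds_unique hlim h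
    have hAB : ((L - M) / L) ^ 2 = 0 := by
      linarith [sq_nonneg ((L - M) / L), sq_nonneg ((l3 - m3) / l3)]
    have hC3 : ((l3 - m3) / l3) ^ 2 = 0 := by
      linarith [sq_nonneg ((L - M) / L), sq_nonneg ((l3 - m3) / l3)]
    simp only [pow_eq_zero_iff two_ne_zero, div_eq_zero_iff, hL, hl3.ne', or_false,
      sub_eq_zero] at hAB hC3
    exact ⟨(Real.sqrt_inj (by positivity) (by positivity)).mp hAB.symm, hC3.symm⟩
  · rintro ⟨hm, rfl⟩
    have hML : M = L := by simp only [M, L, hm]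
    simpa [hML] using hlim

/-- class A3: for solutions of the A3 Ricci-flow ODE system,
quasi-convergence in the same frame holds iff `λ̄₁λ̄₂ = λ₁λ₂` and `λ̄₃ = λ₃`;
`[g]_α` is a 2-parameter family. -/
theorem stmt_2 (k : ℝ) (hk : k ≠ 0)
    (l1 l2 l3 l4 m1 m2 m3 m4 : ℝ)
    (hl1 : 0 < l1) (hl2 : 0 < l2) (hl3 : 0 < l3) (hl4 : 0 < l4)
    (hm1 : 0 < m1) (hm2 : 0 < m2) (hm3 : 0 < m3) (hm4 : 0 < m4)
    (A B C D Ab Bb Cb Db : ℝ → ℝ)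
    (hApos : ∀ t ∈ Set.Ici (0:ℝ), 0 < A t) (hBpos : ∀ t ∈ Set.Ici (0:ℝ), 0 < B t)
    (hCpos : ∀ t ∈ Set.Ici (0:ℝ), 0 < C t) (hDpos : ∀ t ∈ Set.Ici (0:ℝ), 0 < D t)
    (hAbpos : ∀ t ∈ Set.Ici (0:ℝ), 0 < Ab t) (hBbpos : ∀ t ∈ Set.Ici (0:ℝ), 0 < Bb t)
    (hCbpos : ∀ t ∈ Set.Ici (0:ℝ), 0 < Cb t) (hDbpos : ∀ t ∈ Set.Ici (0:ℝ), 0 < Db t)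
    (hA : ∀ t ∈ Set.Ici (0:ℝ),
      HasDerivWithinAt A (-((A t) ^ 2 - (B t) ^ 2) / (B t * D t)) (Set.Ici 0) t)
    (hB : ∀ t ∈ Set.Ici (0:ℝ),
      HasDerivWithinAt B (-((B t) ^ 2 - (A t) ^ 2) / (A t * D t)) (Set.Ici 0) t)
    (hC : ∀ t ∈ Set.Ici (0:ℝ), HasDerivWithinAt C 0 (Set.Ici 0) t)
    (hD : ∀ t ∈ Set.Ici (0:ℝ),
      HasDerivWithinAt D (((A t - B t) ^ 2 + 12 * k ^ 2 * A t * B t) / (A t * B t))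
        (Set.Ici 0) t)
    (hA0 : A 0 = l1) (hB0 : B 0 = l2) (hC0 : C 0 = l3) (hD0 : D 0 = l4)
    (hAlim : Filter.Tendsto A Filter.atTop (nhds (Real.sqrt (l1 * l2))))
    (hBlim : Filter.Tendsto B Filter.atTop (nhds (Real.sqrt (l1 * l2))))
    (hAb : ∀ t ∈ Set.Ici (0:ℝ),
      HasDerivWithinAt Ab (-((Ab t) ^ 2 - (Bb t) ^ 2) / (Bb t * Db t)) (Set.Ici 0) t)
    (hBb : ∀ t ∈ Set.Ici (0:ℝ),
      HasDerivWithinAt Bb (-((Bb t) ^ 2 - (Ab t) ^ 2) / (Ab t * Db t)) (Set.Ici 0) t)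
    (hCb : ∀ t ∈ Set.Ici (0:ℝ), HasDerivWithinAt Cb 0 (Set.Ici 0) t)
    (hDb : ∀ t ∈ Set.Ici (0:ℝ),
      HasDerivWithinAt Db (((Ab t - Bb t) ^ 2 + 12 * k ^ 2 * Ab t * Bb t) / (Ab t * Bb t))
        (Set.Ici 0) t)
    (hAb0 : Ab 0 = m1) (hBb0 : Bb 0 = m2) (hCb0 : Cb 0 = m3) (hDb0 : Db 0 = m4)
    (hAblim : Filter.Tendsto Ab Filter.atTop (nhds (Real.sqrt (m1 * m2))))
    (hBblim : Filter.Tendsto Bb Filter.atTop (nhds (Real.sqrt (m1 * m2)))) :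
    Filter.Tendsto (fun t : ℝ =>
        ((A t - Ab t) / A t) ^ 2 + ((B t - Bb t) / B t) ^ 2 +
        ((C t - Cb t) / C t) ^ 2 + ((D t - Db t) / D t) ^ 2)
      Filter.atTop (nhds 0) ↔ (m1 * m2 = l1 * l2 ∧ m3 = l3) :=
  stmt_2_general k hk l1 l2 l3 m1 m2 m3 hl1 hl2 hl3 hm1 hm2 A B C D Ab Bb Cb Db hC hD hC0 hAlim
    hBlim hCb hDb hCb0 hAblim hBblim
end

section
/- Let λ₁,λ₂,λ₃,λ₄ and λ̄₁,λ̄₂,λ̄₃,λ̄₄ be positive reals. For t ≥ 0 define A(t)=λ₁(1 + 3λ₂t/(λ₁λ₄))^{1/3}, B(t)=λ₂(1 + 3λ₂t/(λ₁λ₄))^{-1/3}, C(t)=λ₃, D(t)=λ₄(1 + 3λ₂t/(λ₁λ₄))^{1/3}, and define Ā,B̄,C̄,D̄ by the same formulas with λ̄ᵢ in place of λᵢ. Then ((A-Ā)/A)² + ((B-B̄)/B)² + ((C-C̄)/C)² + ((D-D̄)/D)² tends to 0 as t → ∞ if and only if λ̄₃ = λ₃ and there exists k > 0 with λ̄₁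 = kλ₁, λ̄₂ = λ₂/k and λ̄₄ = kλ₄; in particular the quasi-convergence class [g]_α is exactly a 1-parameter family. -/
/-!
With `u = 1 + 3λ₂t/(λ₁λ₄)` and `ū = 1 + 3λ̄₂t/(λ̄₁λ̄₄)`, every ratio `Ā/A`, `B̄/B`, `D̄/D` is a
constant times a power of `ū/u`, and `ū/u → r`, the ratio of the two growth rates. So the
quantity converges to `(1 - λ̄₁s/λ₁)² + (1 - λ̄₂/(λ₂s))² + (1 - λ̄₃/λ₃)² + (1 - λ̄₄s/λ₄)²`
with `s = r^{1/3}`, which vanishes iff `λ̄₃ = λ₃` and `(λ̄₁, λ̄₂, λ̄₄) = (kλ₁, λ₂/k, kλ₄)` with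
`k = 1/s`. Conversely such a rescaling divides the growth rate by `k³`, so that `s = 1/k`.
-/

open Filter Topology

lemma tendsto_one_add_mul_div_one_add_mul {a : ℝ} (ha : 0 < a) (b : ℝ) :
    Tendsto (fun t : ℝ => (1 + b * t) / (1 + a * t)) atTop (𝓝 (b / a)) := by
  have hlim : Tendsto (fun t : ℝ => (t⁻¹ + b) / (t⁻¹ + a)) atTop (𝓝 ((0 + b) / (0 + a))) :=
    ((tendsto_inv_atTop_zero.add_const b).div (tendsto_inv_atTop_zero.add_const a)
      (by rw [zero_add]; exact ha.ne'))
  rw [zero_add, zero_add] at hlim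
  refine hlim.congr' ?_
  filter_upwards [eventually_gt_atTop 0] with t ht
  field_simp

lemma tendsto_mul_rpow_div_mul_rpow {a b : ℝ} (ha : 0 < a) (hb : 0 < b) (c d p : ℝ) :
    Tendsto (fun t : ℝ => d * (1 + b * t) ^ p / (c * (1 + a * t) ^ p)) atTop
      (𝓝 (d / c * (b / a) ^ p)) := by
  have hlim := ((tendsto_one_add_mul_div_one_add_mul ha b).rpow_const (p := p)
    (Or.inl (div_pos hb ha).ne')).const_mul (d / c)
  refine hlim.congr' ?_
  filter_upwards [eventually_ge_atTop 0] with t ht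
  rw [Real.div_rpow (by positivity) (by positivity), mul_div_mul_comm]

lemma tendsto_sq_sub_div_self {X Y : ℝ → ℝ} {l : Filter ℝ} {r : ℝ}
    (hX : ∀ᶠ t in l, X t ≠ 0) (h : Tendsto (fun t => Y t / X t) l (𝓝 r)) :
    Tendsto (fun t => ((X t - Y t) / X t) ^ 2) l (𝓝 ((1 - r) ^ 2)) := by
  refine ((tendsto_const_nhds.sub h).pow 2).congr' ?_
  filter_upwards [hX] with t ht
  rw [sub_div, div_self ht]

lemma tendsto_sq_sub_div_self_of_eq_mul_rpow {X Y : ℝ → ℝ} {a b c d p : ℝ}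
    (ha : 0 < a) (hb : 0 < b) (hc : c ≠ 0)
    (hX : ∀ t, X t = c * (1 + a * t) ^ p) (hY : ∀ t, Y t = d * (1 + b * t) ^ p) :
    Tendsto (fun t => ((X t - Y t) / X t) ^ 2) atTop (𝓝 ((1 - d / c * (b / a) ^ p) ^ 2)) := by
  refine tendsto_sq_sub_div_self ?_ ?_
  · filter_upwards [eventually_ge_atTop 0] with t ht
    rw [hX]
    exact mul_ne_zero hc (Real.rpow_pos_of_pos (by positivity) p).ne'
  · simpa only [hX, hY] using tendsto_mul_rpow_div_mul_rpow ha hb c d p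

lemma sq_add_sq_add_sq_add_sq_eq_zero_iff {w x y z : ℝ} :
    w ^ 2 + x ^ 2 + y ^ 2 + z ^ 2 = 0 ↔ w = 0 ∧ x = 0 ∧ y = 0 ∧ z = 0 := by
  constructor
  · intro h
    refine ⟨?_, ?_, ?_, ?_⟩ <;> apply pow_eq_zero_iff two_ne_zero |>.mp <;>
      nlinarith [sq_nonneg w, sq_nonneg x, sq_nonneg y, sq_nonneg z]
  · rintro ⟨rfl, rfl, rfl, rfl⟩
    norm_num

lemma Filter.Tendsto.tendsto_nhds_iff_eq {Y X : Type*} [TopologicalSpace X] [T2Space X]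
    {f : Y → X} {l : Filter Y} [NeBot l] {a b : X} (h : Tendsto f l (𝓝 a)) :
    Tendsto f l (𝓝 b) ↔ a = b :=
  ⟨tendsto_nhds_unique h, fun hab => hab ▸ h⟩

lemma ratios_eq_one_iff_rescaling {l1 l2 l3 l4 m1 m2 m3 m4 s : ℝ}
    (hl1 : l1 ≠ 0) (hl2 : l2 ≠ 0) (hl3 : l3 ≠ 0) (hl4 : l4 ≠ 0)
    (hs : 0 < s) (hs3 : s ^ 3 = 3 * m2 / (m1 * m4) / (3 * l2 / (l1 * l4))) :
    (m1 / l1 * s = 1 ∧ m2 / l2 * s⁻¹ = 1 ∧ m3 / l3 = 1 ∧ m4 / l4 * s = 1) ↔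
      (m3 = l3 ∧ ∃ k : ℝ, 0 < k ∧ m1 = k * l1 ∧ m2 = l2 / k ∧ m4 = k * l4) := by
  constructor
  · rintro ⟨h1, h2, h3, h4⟩
    refine ⟨?_, s⁻¹, inv_pos.mpr hs, ?_, ?_, ?_⟩
    · field_simp at h3; exact h3
    · field_simp at h1 ⊢; linarith
    · field_simp at h2 ⊢; linarith
    · field_simp at h4 ⊢; linarith
  · rintro ⟨rfl, k, hk, rfl, rfl, rfl⟩
    have hsk : s = k⁻¹ := by
      refine (pow_left_inj₀ hs.le (inv_nonneg.mpr hk.le) three_ne_zero).mp ?_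
      rw [hs3]
      field_simp
    subst hsk
    refine ⟨?_, ?_, ?_, ?_⟩ <;> field_simp

theorem stmt_3_general (l1 l2 l3 l4 m1 m2 m3 m4 : ℝ)
    (hl1 : 0 < l1) (hl2 : 0 < l2) (hl3 : 0 < l3) (hl4 : 0 < l4)
    (hm1 : 0 < m1) (hm2 : 0 < m2) (hm4 : 0 < m4)
    (A B C D Ab Bb Cb Db : ℝ → ℝ)
    (hA : ∀ t : ℝ, A t = l1 * (1 + 3 * l2 * t / (l1 * l4)) ^ ((1:ℝ)/3))
    (hB : ∀ t : ℝ, B t = l2 * (1 + 3 * l2 * t / (l1 * l4)) ^ (-(1:ℝ)/3))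
    (hC : ∀ t : ℝ, C t = l3)
    (hD : ∀ t : ℝ, D t = l4 * (1 + 3 * l2 * t / (l1 * l4)) ^ ((1:ℝ)/3))
    (hAb : ∀ t : ℝ, Ab t = m1 * (1 + 3 * m2 * t / (m1 * m4)) ^ ((1:ℝ)/3))
    (hBb : ∀ t : ℝ, Bb t = m2 * (1 + 3 * m2 * t / (m1 * m4)) ^ (-(1:ℝ)/3))
    (hCb : ∀ t : ℝ, Cb t = m3)
    (hDb : ∀ t : ℝ, Db t = m4 * (1 + 3 * m2 * t / (m1 * m4)) ^ ((1:ℝ)/3)) :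
    Filter.Tendsto (fun t : ℝ =>
        ((A t - Ab t) / A t) ^ 2 + ((B t - Bb t) / B t) ^ 2 +
        ((C t - Cb t) / C t) ^ 2 + ((D t - Db t) / D t) ^ 2)
      Filter.atTop (nhds 0) ↔
      (m3 = l3 ∧ ∃ k : ℝ, 0 < k ∧ m1 = k * l1 ∧ m2 = l2 / k ∧ m4 = k * l4) := by
  have ha : 0 < 3 * l2 / (l1 * l4) := by positivity
  have hb : 0 < 3 * m2 / (m1 * m4) := by positivity
  set r := 3 * m2 / (m1 * m4) / (3 * l2 / (l1 * l4)) with hr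
  set s := r ^ ((1:ℝ) / 3) with hs_def
  have hs : 0 < s := Real.rpow_pos_of_pos (div_pos hb ha) _
  have hs3 : s ^ 3 = r := by
    rw [hs_def, one_div]
    exact_mod_cast Real.rpow_inv_natCast_pow (div_pos hb ha).le three_ne_zero
  have hsneg : r ^ (-(1:ℝ) / 3) = s⁻¹ := by rw [neg_div, Real.rpow_neg (div_pos hb ha).le]
  have limA := tendsto_sq_sub_div_self_of_eq_mul_rpow (X := A) (Y := Ab) ha hb hl1.ne'
    (fun t => by rw [hA, mul_div_right_comm]) (fun t => by rw [hAb, mul_div_right_comm])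
  have limB := tendsto_sq_sub_div_self_of_eq_mul_rpow (X := B) (Y := Bb) ha hb hl2.ne'
    (fun t => by rw [hB, mul_div_right_comm]) (fun t => by rw [hBb, mul_div_right_comm])
  have limC := tendsto_sq_sub_div_self (X := C) (Y := Cb) (l := atTop)
    (.of_forall fun t => by rw [hC]; exact hl3.ne')
    (tendsto_const_nhds.congr fun t => by rw [hC, hCb])
  have limD := tendsto_sq_sub_div_self_of_eq_mul_rpow (X := D) (Y := Db) ha hb hl4.ne'
    (fun t => by rw [hD, mul_div_right_comm]) (fun t => by rw [hDb, mul_div_right_comm])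
  have hlim := ((limA.add limB).add limC).add limD
  rw [← hr, hsneg, ← hs_def] at hlim
  rw [hlim.tendsto_nhds_iff_eq,
    ← ratios_eq_one_iff_rescaling hl1.ne' hl2.ne' hl3.ne' hl4.ne' hs hs3,
    sq_add_sq_add_sq_add_sq_eq_zero_iff]
  simp only [sub_eq_zero, eq_comm (a := (1:ℝ))]

/-- class A4: quasi-convergence of diagonal metrics in the same
frame holds iff `λ̄₃ = λ₃` and `(λ̄₁,λ̄₂,λ̄₄) = (kλ₁, λ₂/k, kλ₄)` for some `k > 0`;
`[g]_α` is a 1-parameter family. -/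
theorem stmt_3 (l1 l2 l3 l4 m1 m2 m3 m4 : ℝ)
    (hl1 : 0 < l1) (hl2 : 0 < l2) (hl3 : 0 < l3) (hl4 : 0 < l4)
    (hm1 : 0 < m1) (hm2 : 0 < m2) (hm3 : 0 < m3) (hm4 : 0 < m4)
    (A B C D Ab Bb Cb Db : ℝ → ℝ)
    (hA : ∀ t : ℝ, A t = l1 * (1 + 3 * l2 * t / (l1 * l4)) ^ ((1:ℝ)/3))
    (hB : ∀ t : ℝ, B t = l2 * (1 + 3 * l2 * t / (l1 * l4)) ^ (-(1:ℝ)/3))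
    (hC : ∀ t : ℝ, C t = l3)
    (hD : ∀ t : ℝ, D t = l4 * (1 + 3 * l2 * t / (l1 * l4)) ^ ((1:ℝ)/3))
    (hAb : ∀ t : ℝ, Ab t = m1 * (1 + 3 * m2 * t / (m1 * m4)) ^ ((1:ℝ)/3))
    (hBb : ∀ t : ℝ, Bb t = m2 * (1 + 3 * m2 * t / (m1 * m4)) ^ (-(1:ℝ)/3))
    (hCb : ∀ t : ℝ, Cb t = m3)
    (hDb : ∀ t : ℝ, Db t = m4 * (1 + 3 * m2 * t / (m1 * m4)) ^ ((1:ℝ)/3)) :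
    Filter.Tendsto (fun t : ℝ =>
        ((A t - Ab t) / A t) ^ 2 + ((B t - Bb t) / B t) ^ 2 +
        ((C t - Cb t) / C t) ^ 2 + ((D t - Db t) / D t) ^ 2)
      Filter.atTop (nhds 0) ↔
      (m3 = l3 ∧ ∃ k : ℝ, 0 < k ∧ m1 = k * l1 ∧ m2 = l2 / k ∧ m4 = k * l4) :=
  stmt_3_general l1 l2 l3 l4 m1 m2 m3 m4 hl1 hl2 hl3 hl4 hm1 hm2 hm4 A B C D Ab Bb Cb Db hA hB hC hD
    hAb hBb hCb hDb
end

section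
/- Let λ₁,λ₂,λ₃,λ₄ and λ̄₁,λ̄₂,λ̄₃,λ̄₄ be positive reals; set E₀ = λ₂/(λ₁λ₄), F₀ = λ₃/(λ₂λ₄), Ē₀ = λ̄₂/(λ̄₁λ̄₄), F̄₀ = λ̄₃/(λ̄₂λ̄₄). For t ≥ 0 define A(t)=λ₁(3E₀t+1)^{1/3}, B(t)=λ₂(3E₀t+1)^{-1/3}(3F₀t+1)^{1/3}, C(t)=λ₃(3F₀t+1)^{-1/3}, D(t)=λ₄(3E₀t+1)^{1/3}(3F₀t+1)^{1/3}, and define Ā,B̄,C̄,D̄ by the same formulas with λ̄ᵢ, Ē₀, F̄₀. Then ((A-Ā)/A)² + ((B-B̄)/B)² + ((C-C̄)/C)² + ((D-D̄)/D)² tends to 0 as t → ∞ if and only if (λ̄₁/λ₁)(Ē₀/E₀)^{1/3} = 1, (λ̄₂/λ₂)(E₀/Ē₀)^{1/3}(F̄₀/F₀)^{1/3} = 1, (λ̄₃/λ₃)(F₀/F̄₀)^{1/3} = 1, and (λ̄₄/λ₄)(Ē₀/E₀)^{1/3}(F̄₀/F₀)^{1/3} = 1; in particular any two of λ̄₁,λ̄₂,λ̄₃,λ̄₄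 may be chosen freely and the other two are then determined, so the quasi-convergence class [g]_α is exactly a 2-parameter family. -/
/-! Each of the four relative differences `(X - X̄)/X` equals `1 - X̄/X`, and every ratio `X̄/X` is
a constant times ratios of powers `(3 P t + 1)^r / (3 Q t + 1)^r`, which tend to `(P/Q)^r`. So the
relative differences converge to `1 - Lᵢ`, where the `Lᵢ` are the four left-hand sides of the
claimed relations, and a sum of four squares with limit `0` forces every `Lᵢ = 1`. -/

open Filter Topology

lemma tendsto_affine_div_affine {a b : ℝ} (hb : b ≠ 0) :
    Tendsto (fun t : ℝ => (a * t + 1) / (b * t + 1)) atTop (𝓝 (a / b)) := by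
  have h : Tendsto (fun t : ℝ => (a + t⁻¹) / (b + t⁻¹)) atTop (𝓝 ((a + 0) / (b + 0))) :=
    (tendsto_const_nhds.add tendsto_inv_atTop_zero).div
      (tendsto_const_nhds.add tendsto_inv_atTop_zero) (by simpa using hb)
  rw [add_zero, add_zero] at h
  refine h.congr' ?_
  filter_upwards [eventually_ne_atTop 0] with t ht
  rw [← mul_div_mul_right _ _ ht, add_mul, add_mul, inv_mul_cancel₀ ht]

lemma tendsto_flow_rpow_div {P Q : ℝ} (hP : 0 < P) (hQ : 0 < Q) (r : ℝ) :
    Tendsto (fun t : ℝ => (3 * P * t + 1) ^ r / (3 * Q * t + 1) ^ r) atTop (𝓝 ((P / Q) ^ r)) := by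
  have h := (tendsto_affine_div_affine (a := 3 * P) (by positivity : 3 * Q ≠ 0)).rpow_const
    (p := r) (Or.inl (by positivity))
  rw [mul_div_mul_left _ _ three_ne_zero] at h
  refine h.congr' ?_
  filter_upwards [eventually_ge_atTop 0] with t ht
  exact Real.div_rpow (by positivity) (by positivity) r

lemma div_rpow_neg_div {x y : ℝ} (hx : 0 ≤ x) (hy : 0 ≤ y) (r : ℝ) :
    (x / y) ^ (-r / 3) = (y / x) ^ (r / 3) := by
  rw [neg_div, Real.rpow_neg (div_nonneg hx hy), ← Real.inv_rpow (div_nonneg hx hy), inv_div]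

lemma tendsto_relDiff {x y : ℝ → ℝ} {L : ℝ} (hx : ∀ᶠ t in atTop, x t ≠ 0)
    (h : Tendsto (fun t => y t / x t) atTop (𝓝 L)) :
    Tendsto (fun t => (x t - y t) / x t) atTop (𝓝 (1 - L)) := by
  refine (tendsto_const_nhds.sub h).congr' ?_
  filter_upwards [hx] with t ht
  rw [sub_div, div_self ht]

lemma tendsto_four_sq_zero_iff {f g h k : ℝ → ℝ} {a b c d : ℝ}
    (hf : Tendsto f atTop (𝓝 a)) (hg : Tendsto g atTop (𝓝 b))
    (hh : Tendsto h atTop (𝓝 c)) (hk : Tendsto k atTop (𝓝 d)) :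
    Tendsto (fun t => f t ^ 2 + g t ^ 2 + h t ^ 2 + k t ^ 2) atTop (𝓝 0) ↔
      a = 0 ∧ b = 0 ∧ c = 0 ∧ d = 0 := by
  have hsum := (((hf.pow 2).add (hg.pow 2)).add (hh.pow 2)).add (hk.pow 2)
  constructor
  · intro h0
    have hz : a ^ 2 + b ^ 2 + c ^ 2 + d ^ 2 = 0 := tendsto_nhds_unique hsum h0
    refine ⟨?_, ?_, ?_, ?_⟩ <;> nlinarith [sq_nonneg a, sq_nonneg b, sq_nonneg c, sq_nonneg d]
  · rintro ⟨rfl, rfl, rfl, rfl⟩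
    simpa using hsum

/-- class A6: quasi-convergence of diagonal metrics in the same
frame holds iff the four displayed relations among the initial data hold;
`[g]_α` is a 2-parameter family. -/
theorem stmt_7 (l1 l2 l3 l4 m1 m2 m3 m4 : ℝ)
    (hl1 : 0 < l1) (hl2 : 0 < l2) (hl3 : 0 < l3) (hl4 : 0 < l4)
    (hm1 : 0 < m1) (hm2 : 0 < m2) (hm3 : 0 < m3) (hm4 : 0 < m4)
    (E0 F0 Eb0 Fb0 : ℝ)
    (hE0 : E0 = l2 / (l1 * l4)) (hF0 : F0 = l3 / (l2 * l4))
    (hEb0 : Eb0 = m2 / (m1 * m4)) (hFb0 : Fb0 = m3 / (m2 * m4))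
    (A B C D Ab Bb Cb Db : ℝ → ℝ)
    (hA : ∀ t : ℝ, A t = l1 * (3 * E0 * t + 1) ^ ((1:ℝ)/3))
    (hB : ∀ t : ℝ, B t = l2 * (3 * E0 * t + 1) ^ (-(1:ℝ)/3) * (3 * F0 * t + 1) ^ ((1:ℝ)/3))
    (hC : ∀ t : ℝ, C t = l3 * (3 * F0 * t + 1) ^ (-(1:ℝ)/3))
    (hD : ∀ t : ℝ, D t = l4 * (3 * E0 * t + 1) ^ ((1:ℝ)/3) * (3 * F0 * t + 1) ^ ((1:ℝ)/3))
    (hAb : ∀ t : ℝ, Ab t = m1 * (3 * Eb0 * t + 1) ^ ((1:ℝ)/3))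
    (hBb : ∀ t : ℝ, Bb t = m2 * (3 * Eb0 * t + 1) ^ (-(1:ℝ)/3) * (3 * Fb0 * t + 1) ^ ((1:ℝ)/3))
    (hCb : ∀ t : ℝ, Cb t = m3 * (3 * Fb0 * t + 1) ^ (-(1:ℝ)/3))
    (hDb : ∀ t : ℝ, Db t = m4 * (3 * Eb0 * t + 1) ^ ((1:ℝ)/3) * (3 * Fb0 * t + 1) ^ ((1:ℝ)/3)) :
    Filter.Tendsto (fun t : ℝ =>
        ((A t - Ab t) / A t) ^ 2 + ((B t - Bb t) / B t) ^ 2 +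
        ((C t - Cb t) / C t) ^ 2 + ((D t - Db t) / D t) ^ 2)
      Filter.atTop (nhds 0) ↔
      ((m1 / l1) * (Eb0 / E0) ^ ((1:ℝ)/3) = 1 ∧
       (m2 / l2) * (E0 / Eb0) ^ ((1:ℝ)/3) * (Fb0 / F0) ^ ((1:ℝ)/3) = 1 ∧
       (m3 / l3) * (F0 / Fb0) ^ ((1:ℝ)/3) = 1 ∧
       (m4 / l4) * (Eb0 / E0) ^ ((1:ℝ)/3) * (Fb0 / F0) ^ ((1:ℝ)/3) = 1) := by
  have hE : 0 < E0 := hE0 ▸ by positivity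
  have hF : 0 < F0 := hF0 ▸ by positivity
  have hEb : 0 < Eb0 := hEb0 ▸ by positivity
  have hFb : 0 < Fb0 := hFb0 ▸ by positivity
  have ratioE := tendsto_flow_rpow_div hEb hE
  have ratioF := tendsto_flow_rpow_div hFb hF
  rw [← div_rpow_neg_div hEb.le hE.le, ← div_rpow_neg_div hFb.le hF.le]
  have eventually_nonneg : ∀ᶠ t : ℝ in atTop, 0 ≤ t := eventually_ge_atTop 0
  rw [tendsto_four_sq_zero_iff
    (tendsto_relDiff (eventually_nonneg.mono fun t ht => by rw [hA]; positivity)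
      (by simp_rw [hA, hAb, mul_div_mul_comm]; exact tendsto_const_nhds.mul (ratioE _)))
    (tendsto_relDiff (eventually_nonneg.mono fun t ht => by rw [hB]; positivity)
      (by simp_rw [hB, hBb, mul_div_mul_comm]
          exact (tendsto_const_nhds.mul (ratioE _)).mul (ratioF _)))
    (tendsto_relDiff (eventually_nonneg.mono fun t ht => by rw [hC]; positivity)
      (by simp_rw [hC, hCb, mul_div_mul_comm]; exact tendsto_const_nhds.mul (ratioF _)))
    (tendsto_relDiff (eventually_nonneg.mono fun t ht => by rw [hD]; positivity)
      (by simp_rw [hD, hDb, mul_div_mul_comm]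
          exact (tendsto_const_nhds.mul (ratioE _)).mul (ratioF _)))]
  simp only [sub_eq_zero, eq_comm (a := (1 : ℝ))]
end

section
/- Let λ₁,λ₂,λ₃,λ₄ and λ̄₁,λ̄₂,λ̄₃,λ̄₄ be positive reals and let a,b,c be real numbers. Suppose A,B,C,D : [0,∞) → (0,∞) are differentiable and satisfy dA/dt = B/C + C/B + 2, dB/dt = C/A + D/C - B²/(AC), dC/dt = B/A + D/B - C²/(AB), dD/dt = -D²/(BC) with A(0)=λ₁, B(0)=λ₂, C(0)=λ₃, D(0)=λ₄, with A(t)/t → 4, B(t)/C(t) → 1 and B(t) → ∞ as t → ∞; let Ā,B̄,C̄,D̄ satisfy the same ODE system with initial data λ̄₁,λ̄₂,λ̄₃,λ̄₄ and the same asymptotic properties. Then the quantity ((A-Ā-a²B̄-b²C̄-c²D̄)/A)² + ((B-B̄-a²D̄)/B)² + ((C-C̄-b²D̄)/C)² + ((D-D̄)/D)² + 2(aB̄-acD̄)²/(AB) + 2(bC̄+bcD̄)²/(AC) + 2(cD̄)²/(AD) + 2(abD̄)²/(BC) + 2(aD̄)²/(BD) + 2(bD̄)²/(CD) tends to 0 as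 t → ∞ if and only if λ̄₂λ̄₃λ̄₄² = λ₂λ₃λ₄², for every choice of a,b,c; in particular the quasi-convergence class [g] is exactly a 3-parameter family. -/
/-!
Along the flow `K = B C D²` is conserved (`K = λ₂λ₃λ₄²`), so the `D`-equation becomes
`(D⁻³)' = 3 / K` and `t D³ → K / 3`; together with `B / C → 1` this gives `B D → √K` and
`B, C = o(t)`. For two solutions, `(D̄ / D)³` therefore tends to `K̄ / K`. If the sum tends to `0`,
its term `((D - D̄) / D)²` forces `D̄ / D → 1`, hence `K̄ = K`. Conversely, if `K̄ = K` then
`D̄ / D`, `B̄ / B`, `C̄ / C → 1` while `D̄ / B`, `D̄ / C`, `B / A`, `C / A`, `D̄ / A → 0`, and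
each of the ten terms tends to `0`.
-/

open Filter Set Topology

theorem eq_of_hasDerivWithinAt_zero_Ici {f : ℝ → ℝ} {a : ℝ}
    (hf : ∀ t ∈ Ici a, HasDerivWithinAt f 0 (Ici a) t) :
    ∀ t ∈ Ici a, f t = f a := fun t ht =>
  constant_of_has_deriv_right_zero
    (fun y hy => (hf y hy.1).continuousWithinAt.mono Icc_subset_Ici_self)
    (fun y hy => (hf y hy.1).mono (Ici_subset_Ici.2 hy.1)) t ⟨ht, le_rfl⟩

theorem tendsto_mul_of_inv_eq_add_mul {f : ℝ → ℝ} {c k : ℝ} (hk : k ≠ 0)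
    (hf : ∀ t ∈ Ici (0:ℝ), (f t)⁻¹ = c + k * t) :
    Tendsto (fun t => t * f t) atTop (𝓝 k⁻¹) := by
  have hlim : Tendsto (fun t : ℝ => (c / t + k)⁻¹) atTop (𝓝 k⁻¹) := by
    simpa using
      ((tendsto_const_nhds.div_atTop tendsto_id).add_const k).inv₀ (by simpa using hk)
  refine hlim.congr' ?_
  filter_upwards [eventually_gt_atTop 0] with t ht
  rw [← inv_inv (f t), hf t ht.le, div_add' _ _ _ ht.ne', inv_div, div_eq_mul_inv]

theorem inv_pow_three_eq_of_hasDerivWithinAt {D : ℝ → ℝ} {K : ℝ}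
    (hD : ∀ t ∈ Ici (0:ℝ), HasDerivWithinAt D (-D t ^ 4 / K) (Ici 0) t)
    (hD0 : ∀ t ∈ Ici (0:ℝ), D t ≠ 0) :
    ∀ t ∈ Ici (0:ℝ), (D t ^ 3)⁻¹ = (D 0 ^ 3)⁻¹ + 3 / K * t := by
  have hconst : ∀ t ∈ Ici (0:ℝ),
      HasDerivWithinAt (fun t => (D t ^ 3)⁻¹ - 3 / K * t) 0 (Ici 0) t := fun t ht => by
    refine ((((hD t ht).fun_pow 3).fun_inv (pow_ne_zero 3 (hD0 t ht))).fun_sub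
      ((hasDerivWithinAt_id t _).const_mul (3 / K))).congr_deriv ?_
    have hDt := hD0 t ht
    field_simp
    ring
  intro t ht
  have := eq_of_hasDerivWithinAt_zero_Ici hconst t ht
  simp only [mul_zero, sub_zero] at this
  linarith

theorem tendsto_of_tendsto_pow {α : Type*} {l : Filter α} {f : α → ℝ} {n : ℕ} (hn : n ≠ 0)
    {x : ℝ} (hx : 0 ≤ x) (hf : ∀ᶠ y in l, 0 ≤ f y)
    (h : Tendsto (fun y => f y ^ n) l (𝓝 (x ^ n))) : Tendsto f l (𝓝 x) := by
  have hroot : ContinuousAt (fun z : ℝ => z ^ (n⁻¹ : ℝ)) (x ^ n) :=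
    Real.continuousAt_rpow_const _ _ (Or.inr (by positivity))
  have := hroot.tendsto.comp h
  rw [Real.pow_rpow_inv_natCast hx hn] at this
  refine this.congr' ?_
  filter_upwards [hf] with y hy using Real.pow_rpow_inv_natCast hy hn

def SolvesBCDSystem (A B C D : ℝ → ℝ) : Prop :=
  ∀ t ∈ Ici (0:ℝ), 0 < B t ∧ 0 < C t ∧ 0 < D t ∧
    HasDerivWithinAt B (C t / A t + D t / C t - B t ^ 2 / (A t * C t)) (Ici 0) t ∧
    HasDerivWithinAt C (B t / A t + D t / B t - C t ^ 2 / (A t * B t)) (Ici 0) t ∧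
    HasDerivWithinAt D (-D t ^ 2 / (B t * C t)) (Ici 0) t

namespace SolvesBCDSystem

variable {A B C D : ℝ → ℝ}

theorem swap (h : SolvesBCDSystem A B C D) : SolvesBCDSystem A C B D := fun t ht => by
  obtain ⟨hB, hC, hD, hB', hC', hD'⟩ := h t ht
  exact ⟨hC, hB, hD, hC', hB', by rwa [mul_comm]⟩

theorem conserved (h : SolvesBCDSystem A B C D) :
    ∀ t ∈ Ici (0:ℝ), B t * C t * D t ^ 2 = B 0 * C 0 * D 0 ^ 2 := by
  refine eq_of_hasDerivWithinAt_zero_Ici fun t ht => ?_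
  obtain ⟨hB, hC, -, hB', hC', hD'⟩ := h t ht
  refine ((hB'.fun_mul hC').fun_mul (hD'.fun_pow 2)).congr_deriv ?_
  field_simp
  ring

theorem conserved_pos (h : SolvesBCDSystem A B C D) : 0 < B 0 * C 0 * D 0 ^ 2 := by
  obtain ⟨hB, hC, hD, -⟩ := h 0 self_mem_Ici
  positivity

theorem inv_D_pow_three (h : SolvesBCDSystem A B C D) :
    ∀ t ∈ Ici (0:ℝ), (D t ^ 3)⁻¹ = (D 0 ^ 3)⁻¹ + 3 / (B 0 * C 0 * D 0 ^ 2) * t := by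
  refine inv_pow_three_eq_of_hasDerivWithinAt (fun t ht => ?_) fun t ht => (h t ht).2.2.1.ne'
  obtain ⟨hB, hC, hD, -, -, hD'⟩ := h t ht
  convert hD' using 1
  rw [← h.conserved t ht]
  field_simp

theorem tendsto_mul_D_pow_three (h : SolvesBCDSystem A B C D) :
    Tendsto (fun t => t * D t ^ 3) atTop (𝓝 (B 0 * C 0 * D 0 ^ 2 / 3)) := by
  simpa using tendsto_mul_of_inv_eq_add_mul (by positivity [h.conserved_pos]) h.inv_D_pow_three

theorem eventually_pos (h : SolvesBCDSystem A B C D) :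
    ∀ᶠ t in atTop, 0 < t ∧ 0 < B t ∧ 0 < C t ∧ 0 < D t := by
  filter_upwards [eventually_gt_atTop 0] with t ht
  obtain ⟨hB, hC, hD, -⟩ := h t ht.le
  exact ⟨ht, hB, hC, hD⟩

theorem tendsto_D (h : SolvesBCDSystem A B C D) : Tendsto D atTop (𝓝 0) := by
  refine tendsto_of_tendsto_pow three_ne_zero le_rfl ?_ ?_
  · filter_upwards [h.eventually_pos] with t ⟨_, _, _, hD⟩ using hD.le
  · have := h.tendsto_mul_D_pow_three.mul tendsto_inv_atTop_zero
    rw [mul_zero, ← zero_pow three_ne_zero] at this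
    refine this.congr' ?_
    filter_upwards [h.eventually_pos] with t ⟨ht, _⟩
    field_simp

theorem tendsto_B_mul_D (h : SolvesBCDSystem A B C D)
    (hBC : Tendsto (fun t => B t / C t) atTop (𝓝 1)) :
    Tendsto (fun t => B t * D t) atTop (𝓝 (√(B 0 * C 0 * D 0 ^ 2))) := by
  refine tendsto_of_tendsto_pow two_ne_zero (Real.sqrt_nonneg _) ?_ ?_
  · filter_upwards [h.eventually_pos] with t ⟨_, hB, _, hD⟩ using by positivity
  · rw [Real.sq_sqrt h.conserved_pos.le]
    have := hBC.mul_const (B 0 * C 0 * D 0 ^ 2)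
    rw [one_mul] at this
    refine this.congr' ?_
    filter_upwards [h.eventually_pos] with t ⟨ht, _, hC, _⟩
    rw [← h.conserved t ht.le]
    field_simp

theorem tendsto_B_div (h : SolvesBCDSystem A B C D)
    (hBC : Tendsto (fun t => B t / C t) atTop (𝓝 1)) :
    Tendsto (fun t => B t / t) atTop (𝓝 0) := by
  refine tendsto_of_tendsto_pow three_ne_zero le_rfl ?_ ?_
  · filter_upwards [h.eventually_pos] with t ⟨ht, hB, _⟩ using by positivity
  -- `(B / t)³ = (B D)³ / (t D³) · t⁻²`
  · have := ((h.tendsto_B_mul_D hBC).pow 3).div h.tendsto_mul_D_pow_three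
      (by positivity [h.conserved_pos]) |>.mul
        (tendsto_inv_atTop_zero.comp (tendsto_pow_atTop two_ne_zero))
    rw [mul_zero, ← zero_pow three_ne_zero] at this
    refine this.congr' ?_
    filter_upwards [h.eventually_pos] with t ⟨ht, _, _, hD⟩
    simp only [Pi.div_apply, Function.comp_apply]
    field_simp

theorem tendsto_D_div_B (h : SolvesBCDSystem A B C D)
    (hBC : Tendsto (fun t => B t / C t) atTop (𝓝 1)) :
    Tendsto (fun t => D t / B t) atTop (𝓝 0) := by
  have := (h.tendsto_D.mul h.tendsto_D).div (h.tendsto_B_mul_D hBC)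
    (Real.sqrt_pos.2 h.conserved_pos).ne'
  rw [mul_zero, zero_div] at this
  refine this.congr' ?_
  filter_upwards [h.eventually_pos] with t ⟨_, hB, _, hD⟩
  simp only [Pi.div_apply]
  field_simp

variable {Ab Bb Cb Db : ℝ → ℝ}

theorem tendsto_div_D_pow_three (h : SolvesBCDSystem A B C D)
    (hb : SolvesBCDSystem Ab Bb Cb Db) :
    Tendsto (fun t => (Db t / D t) ^ 3) atTop
      (𝓝 (Bb 0 * Cb 0 * Db 0 ^ 2 / (B 0 * C 0 * D 0 ^ 2))) := by
  have := hb.tendsto_mul_D_pow_three.div h.tendsto_mul_D_pow_three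
    (by positivity [h.conserved_pos])
  rw [div_div_div_cancel_right₀ three_ne_zero] at this
  refine this.congr' ?_
  filter_upwards [h.eventually_pos] with t ⟨ht, _, _, hD⟩
  simp only [Pi.div_apply]
  field_simp

theorem conserved_eq_of_tendsto_div_D (h : SolvesBCDSystem A B C D)
    (hb : SolvesBCDSystem Ab Bb Cb Db) (hD : Tendsto (fun t => Db t / D t) atTop (𝓝 1)) :
    Bb 0 * Cb 0 * Db 0 ^ 2 = B 0 * C 0 * D 0 ^ 2 := by
  have := tendsto_nhds_unique (h.tendsto_div_D_pow_three hb) (by simpa using hD.pow 3)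
  rwa [div_eq_one_iff_eq h.conserved_pos.ne'] at this

theorem tendsto_div_D_of_conserved_eq (h : SolvesBCDSystem A B C D)
    (hb : SolvesBCDSystem Ab Bb Cb Db) (hK : Bb 0 * Cb 0 * Db 0 ^ 2 = B 0 * C 0 * D 0 ^ 2) :
    Tendsto (fun t => Db t / D t) atTop (𝓝 1) := by
  refine tendsto_of_tendsto_pow three_ne_zero zero_le_one ?_ ?_
  · filter_upwards [h.eventually_pos, hb.eventually_pos] with t ⟨_, _, _, hD⟩ ⟨_, _, _, hDb⟩
    positivity
  · simpa [hK, div_self h.conserved_pos.ne'] using h.tendsto_div_D_pow_three hb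

theorem tendsto_div_B_of_conserved_eq (h : SolvesBCDSystem A B C D)
    (hb : SolvesBCDSystem Ab Bb Cb Db) (hBC : Tendsto (fun t => B t / C t) atTop (𝓝 1))
    (hBCb : Tendsto (fun t => Bb t / Cb t) atTop (𝓝 1))
    (hK : Bb 0 * Cb 0 * Db 0 ^ 2 = B 0 * C 0 * D 0 ^ 2) :
    Tendsto (fun t => Bb t / B t) atTop (𝓝 1) := by
  have hsqrt : 0 < √(B 0 * C 0 * D 0 ^ 2) := Real.sqrt_pos.2 h.conserved_pos
  have := ((hb.tendsto_B_mul_D hBCb).div (h.tendsto_B_mul_D hBC) hsqrt.ne').div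
    (h.tendsto_div_D_of_conserved_eq hb hK) one_ne_zero
  rw [hK, div_self hsqrt.ne', div_one] at this
  refine this.congr' ?_
  filter_upwards [h.eventually_pos, hb.eventually_pos] with t ⟨_, hB, _, hD⟩ ⟨_, _, _, hDb⟩
  simp only [Pi.div_apply]
  field_simp

theorem tendsto_D_div_B_of_conserved_eq (h : SolvesBCDSystem A B C D)
    (hb : SolvesBCDSystem Ab Bb Cb Db) (hBC : Tendsto (fun t => B t / C t) atTop (𝓝 1))
    (hK : Bb 0 * Cb 0 * Db 0 ^ 2 = B 0 * C 0 * D 0 ^ 2) :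
    Tendsto (fun t => Db t / B t) atTop (𝓝 0) := by
  have := (h.tendsto_div_D_of_conserved_eq hb hK).mul (h.tendsto_D_div_B hBC)
  rw [mul_zero] at this
  refine this.congr' ?_
  filter_upwards [h.eventually_pos] with t ⟨_, _, _, hD⟩
  field_simp

end SolvesBCDSystem

/-- `|ḡ - g|²_g` for `g = diag(A, B, C, D)` in the frame `α` and `ḡ = diag(Ā, B̄, C̄, D̄)` in the
frame `β`, with `Ab, Bb, Cb, Db` standing for `Ā, B̄, C̄, D̄`. -/
noncomputable def normSqDiff (a b c : ℝ) (A B C D Ab Bb Cb Db : ℝ → ℝ) (t : ℝ) : ℝ :=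
  ((A t - Ab t - a ^ 2 * Bb t - b ^ 2 * Cb t - c ^ 2 * Db t) / A t) ^ 2 +
  ((B t - Bb t - a ^ 2 * Db t) / B t) ^ 2 +
  ((C t - Cb t - b ^ 2 * Db t) / C t) ^ 2 +
  ((D t - Db t) / D t) ^ 2 +
  2 * (a * Bb t - a * c * Db t) ^ 2 / (A t * B t) +
  2 * (b * Cb t + b * c * Db t) ^ 2 / (A t * C t) +
  2 * (c * Db t) ^ 2 / (A t * D t) +
  2 * (a * b * Db t) ^ 2 / (B t * C t) +
  2 * (a * Db t) ^ 2 / (B t * D t) +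
  2 * (b * Db t) ^ 2 / (C t * D t)

theorem normSqDiff_eq (a b c : ℝ) {A B C D Ab Bb Cb Db : ℝ → ℝ} {t : ℝ} (ht : t ≠ 0)
    (hA : A t ≠ 0) (hB : B t ≠ 0) (hC : C t ≠ 0) (hD : D t ≠ 0) :
    normSqDiff a b c A B C D Ab Bb Cb Db t =
      ((A t / t - Ab t / t - a ^ 2 * (Bb t / t) - b ^ 2 * (Cb t / t) - c ^ 2 * (Db t / t)) /
          (A t / t)) ^ 2 +
        (1 - Bb t / B t - a ^ 2 * (Db t / B t)) ^ 2 +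
        (1 - Cb t / C t - b ^ 2 * (Db t / C t)) ^ 2 +
        (1 - Db t / D t) ^ 2 +
        2 * (a * (Bb t / B t) - a * c * (Db t / B t)) ^ 2 * ((B t / t) / (A t / t)) +
        2 * (b * (Cb t / C t) + b * c * (Db t / C t)) ^ 2 * ((C t / t) / (A t / t)) +
        2 * c ^ 2 * (Db t / D t) * ((Db t / t) / (A t / t)) +
        2 * (a * b) ^ 2 * (Db t / B t) * (Db t / C t) +
        2 * a ^ 2 * (Db t / B t) * (Db t / D t) +
        2 * b ^ 2 * (Db t / C t) * (Db t / D t) := by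
  unfold normSqDiff
  field_simp

namespace SolvesBCDSystem

variable {A B C D Ab Bb Cb Db : ℝ → ℝ}

theorem tendsto_normSqDiff_of_conserved_eq (a b c : ℝ) {α : ℝ} (hα : α ≠ 0)
    (h : SolvesBCDSystem A B C D) (hb : SolvesBCDSystem Ab Bb Cb Db)
    (hApos : ∀ᶠ t in atTop, 0 < A t)
    (hA : Tendsto (fun t => A t / t) atTop (𝓝 α))
    (hAb : Tendsto (fun t => Ab t / t) atTop (𝓝 α))
    (hBC : Tendsto (fun t => B t / C t) atTop (𝓝 1))
    (hBCb : Tendsto (fun t => Bb t / Cb t) atTop (𝓝 1))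
    (hK : Bb 0 * Cb 0 * Db 0 ^ 2 = B 0 * C 0 * D 0 ^ 2) :
    Tendsto (normSqDiff a b c A B C D Ab Bb Cb Db) atTop (𝓝 0) := by
  have hCB : Tendsto (fun t => C t / B t) atTop (𝓝 1) := by simpa using hBC.inv₀ one_ne_zero
  have hCBb : Tendsto (fun t => Cb t / Bb t) atTop (𝓝 1) := by simpa using hBCb.inv₀ one_ne_zero
  have hK' : Cb 0 * Bb 0 * Db 0 ^ 2 = C 0 * B 0 * D 0 ^ 2 := by
    rw [mul_comm (Cb 0), mul_comm (C 0), hK]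
  have hBbt := hb.tendsto_B_div hBCb
  have hCbt := hb.swap.tendsto_B_div hCBb
  have hDbt : Tendsto (fun t => Db t / t) atTop (𝓝 0) := hb.tendsto_D.div_atTop tendsto_id
  have hBbB := h.tendsto_div_B_of_conserved_eq hb hBC hBCb hK
  have hCbC := h.swap.tendsto_div_B_of_conserved_eq hb.swap hCB hCBb hK'
  have hDbD := h.tendsto_div_D_of_conserved_eq hb hK
  have hDbB := h.tendsto_D_div_B_of_conserved_eq hb hBC hK
  have hDbC := h.swap.tendsto_D_div_B_of_conserved_eq hb.swap hCB hK'
  have hratios := (h.eventually_pos.and hApos).mono fun t ⟨⟨ht, hB, hC, hD⟩, hAt⟩ =>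
    normSqDiff_eq a b c (Ab := Ab) (Bb := Bb) (Cb := Cb) (Db := Db) ht.ne' hAt.ne' hB.ne'
      hC.ne' hD.ne'
  refine (tendsto_congr' hratios).2 ?_
  rw [show (0:ℝ) = 0 + 0 + 0 + 0 + 0 + 0 + 0 + 0 + 0 + 0 by norm_num]
  repeat refine Tendsto.add ?_ ?_
  · simpa using ((((((hA.sub hAb).sub (hBbt.const_mul _)).sub (hCbt.const_mul _)).sub
      (hDbt.const_mul _)).div hA hα).pow 2)
  · simpa using ((hBbB.const_sub 1).sub (hDbB.const_mul _)).pow 2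
  · simpa using ((hCbC.const_sub 1).sub (hDbC.const_mul _)).pow 2
  · simpa using (hDbD.const_sub 1).pow 2
  · simpa using ((((hBbB.const_mul a).sub (hDbB.const_mul _)).pow 2).const_mul 2).mul
      ((h.tendsto_B_div hBC).div hA hα)
  · simpa using ((((hCbC.const_mul b).add (hDbC.const_mul _)).pow 2).const_mul 2).mul
      ((h.swap.tendsto_B_div hCB).div hA hα)
  · simpa using (hDbD.const_mul (2 * c ^ 2)).mul (hDbt.div hA hα)
  · simpa using (hDbB.const_mul (2 * (a * b) ^ 2)).mul hDbC
  · simpa using (hDbB.const_mul (2 * a ^ 2)).mul hDbD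
  · simpa using (hDbC.const_mul (2 * b ^ 2)).mul hDbD

theorem tendsto_div_D_of_tendsto_normSqDiff (a b c : ℝ) (h : SolvesBCDSystem A B C D)
    (hApos : ∀ᶠ t in atTop, 0 < A t)
    (hlim : Tendsto (normSqDiff a b c A B C D Ab Bb Cb Db) atTop (𝓝 0)) :
    Tendsto (fun t => Db t / D t) atTop (𝓝 1) := by
  have hsq : Tendsto (fun t => ((D t - Db t) / D t) ^ 2) atTop (𝓝 0) := by
    refine tendsto_of_tendsto_of_tendsto_of_le_of_le' tendsto_const_nhds hlim
      (Eventually.of_forall fun t => sq_nonneg _) ?_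
    filter_upwards [h.eventually_pos, hApos] with t ⟨_, hB, hC, hD⟩ hA
    unfold normSqDiff
    have := sq_nonneg ((A t - Ab t - a ^ 2 * Bb t - b ^ 2 * Cb t - c ^ 2 * Db t) / A t)
    have := sq_nonneg ((B t - Bb t - a ^ 2 * Db t) / B t)
    have := sq_nonneg ((C t - Cb t - b ^ 2 * Db t) / C t)
    have : 0 ≤ 2 * (a * Bb t - a * c * Db t) ^ 2 / (A t * B t) := by positivity
    have : 0 ≤ 2 * (b * Cb t + b * c * Db t) ^ 2 / (A t * C t) := by positivity
    have : 0 ≤ 2 * (c * Db t) ^ 2 / (A t * D t) := by positivity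
    have : 0 ≤ 2 * (a * b * Db t) ^ 2 / (B t * C t) := by positivity
    have : 0 ≤ 2 * (a * Db t) ^ 2 / (B t * D t) := by positivity
    have : 0 ≤ 2 * (b * Db t) ^ 2 / (C t * D t) := by positivity
    linarith
  have habs : Tendsto (fun t => |(D t - Db t) / D t|) atTop (𝓝 0) :=
    tendsto_of_tendsto_pow two_ne_zero le_rfl (Eventually.of_forall fun _ => abs_nonneg _)
      (by simpa using hsq)
  have := ((tendsto_zero_iff_abs_tendsto_zero _).2 habs).const_sub 1
  rw [sub_zero] at this
  refine this.congr' ?_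
  filter_upwards [h.eventually_pos] with t ⟨_, _, _, hD⟩
  field_simp
  ring

end SolvesBCDSystem

theorem stmt_10_general (l2 l3 l4 m2 m3 m4 a b c : ℝ)
    (A B C D Ab Bb Cb Db : ℝ → ℝ)
    (hApos : ∀ t ∈ Set.Ici (0:ℝ), 0 < A t) (hBpos : ∀ t ∈ Set.Ici (0:ℝ), 0 < B t)
    (hCpos : ∀ t ∈ Set.Ici (0:ℝ), 0 < C t) (hDpos : ∀ t ∈ Set.Ici (0:ℝ), 0 < D t)
    (hBbpos : ∀ t ∈ Set.Ici (0:ℝ), 0 < Bb t)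
    (hCbpos : ∀ t ∈ Set.Ici (0:ℝ), 0 < Cb t) (hDbpos : ∀ t ∈ Set.Ici (0:ℝ), 0 < Db t)
    (hB : ∀ t ∈ Set.Ici (0:ℝ),
      HasDerivWithinAt B (C t / A t + D t / C t - (B t) ^ 2 / (A t * C t)) (Set.Ici 0) t)
    (hC : ∀ t ∈ Set.Ici (0:ℝ),
      HasDerivWithinAt C (B t / A t + D t / B t - (C t) ^ 2 / (A t * B t)) (Set.Ici 0) t)
    (hD : ∀ t ∈ Set.Ici (0:ℝ),
      HasDerivWithinAt D (-(D t) ^ 2 / (B t * C t)) (Set.Ici 0) t)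
    (hB0 : B 0 = l2) (hC0 : C 0 = l3) (hD0 : D 0 = l4)
    (hAlim : Filter.Tendsto (fun t => A t / t) Filter.atTop (nhds 4))
    (hBClim : Filter.Tendsto (fun t => B t / C t) Filter.atTop (nhds 1))
    (hBb : ∀ t ∈ Set.Ici (0:ℝ),
      HasDerivWithinAt Bb (Cb t / Ab t + Db t / Cb t - (Bb t) ^ 2 / (Ab t * Cb t)) (Set.Ici 0) t)
    (hCb : ∀ t ∈ Set.Ici (0:ℝ),
      HasDerivWithinAt Cb (Bb t / Ab t + Db t / Bb t - (Cb t) ^ 2 / (Ab t * Bb t)) (Set.Ici 0) t)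
    (hDb : ∀ t ∈ Set.Ici (0:ℝ),
      HasDerivWithinAt Db (-(Db t) ^ 2 / (Bb t * Cb t)) (Set.Ici 0) t)
    (hBb0 : Bb 0 = m2) (hCb0 : Cb 0 = m3) (hDb0 : Db 0 = m4)
    (hAblim : Filter.Tendsto (fun t => Ab t / t) Filter.atTop (nhds 4))
    (hBbClim : Filter.Tendsto (fun t => Bb t / Cb t) Filter.atTop (nhds 1)) :
    Filter.Tendsto (fun t : ℝ =>
        ((A t - Ab t - a ^ 2 * Bb t - b ^ 2 * Cb t - c ^ 2 * Db t) / A t) ^ 2 +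
        ((B t - Bb t - a ^ 2 * Db t) / B t) ^ 2 +
        ((C t - Cb t - b ^ 2 * Db t) / C t) ^ 2 +
        ((D t - Db t) / D t) ^ 2 +
        2 * (a * Bb t - a * c * Db t) ^ 2 / (A t * B t) +
        2 * (b * Cb t + b * c * Db t) ^ 2 / (A t * C t) +
        2 * (c * Db t) ^ 2 / (A t * D t) +
        2 * (a * b * Db t) ^ 2 / (B t * C t) +
        2 * (a * Db t) ^ 2 / (B t * D t) +
        2 * (b * Db t) ^ 2 / (C t * D t))
      Filter.atTop (nhds 0) ↔ m2 * m3 * m4 ^ 2 = l2 * l3 * l4 ^ 2 := by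
  have hf : SolvesBCDSystem A B C D := fun t ht =>
    ⟨hBpos t ht, hCpos t ht, hDpos t ht, hB t ht, hC t ht, hD t ht⟩
  have hfb : SolvesBCDSystem Ab Bb Cb Db := fun t ht =>
    ⟨hBbpos t ht, hCbpos t ht, hDbpos t ht, hBb t ht, hCb t ht, hDb t ht⟩
  have hApos' : ∀ᶠ t in atTop, 0 < A t := eventually_atTop.2 ⟨0, hApos⟩
  rw [← hB0, ← hC0, ← hD0, ← hBb0, ← hCb0, ← hDb0]
  exact ⟨fun hlim => hf.conserved_eq_of_tendsto_div_D hfb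
      (hf.tendsto_div_D_of_tendsto_normSqDiff a b c hApos' hlim),
    hf.tendsto_normSqDiff_of_conserved_eq a b c four_ne_zero hfb hApos' hAlim hAblim hBClim
      hBbClim⟩

/-- class A7i, different frames: quasi-convergence holds iff
`λ̄₂λ̄₃λ̄₄² = λ₂λ₃λ₄²`, for every choice of `a,b,c`; `[g]` is a
3-parameter family. -/
theorem stmt_10 (l1 l2 l3 l4 m1 m2 m3 m4 a b c : ℝ)
    (hl1 : 0 < l1) (hl2 : 0 < l2) (hl3 : 0 < l3) (hl4 : 0 < l4)
    (hm1 : 0 < m1) (hm2 : 0 < m2) (hm3 : 0 < m3) (hm4 : 0 < m4)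
    (A B C D Ab Bb Cb Db : ℝ → ℝ)
    (hApos : ∀ t ∈ Set.Ici (0:ℝ), 0 < A t) (hBpos : ∀ t ∈ Set.Ici (0:ℝ), 0 < B t)
    (hCpos : ∀ t ∈ Set.Ici (0:ℝ), 0 < C t) (hDpos : ∀ t ∈ Set.Ici (0:ℝ), 0 < D t)
    (hAbpos : ∀ t ∈ Set.Ici (0:ℝ), 0 < Ab t) (hBbpos : ∀ t ∈ Set.Ici (0:ℝ), 0 < Bb t)
    (hCbpos : ∀ t ∈ Set.Ici (0:ℝ), 0 < Cb t) (hDbpos : ∀ t ∈ Set.Ici (0:ℝ), 0 < Db t)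
    (hA : ∀ t ∈ Set.Ici (0:ℝ),
      HasDerivWithinAt A (B t / C t + C t / B t + 2) (Set.Ici 0) t)
    (hB : ∀ t ∈ Set.Ici (0:ℝ),
      HasDerivWithinAt B (C t / A t + D t / C t - (B t) ^ 2 / (A t * C t)) (Set.Ici 0) t)
    (hC : ∀ t ∈ Set.Ici (0:ℝ),
      HasDerivWithinAt C (B t / A t + D t / B t - (C t) ^ 2 / (A t * B t)) (Set.Ici 0) t)
    (hD : ∀ t ∈ Set.Ici (0:ℝ),
      HasDerivWithinAt D (-(D t) ^ 2 / (B t * C t)) (Set.Ici 0) t)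
    (hA0 : A 0 = l1) (hB0 : B 0 = l2) (hC0 : C 0 = l3) (hD0 : D 0 = l4)
    (hAlim : Filter.Tendsto (fun t => A t / t) Filter.atTop (nhds 4))
    (hBClim : Filter.Tendsto (fun t => B t / C t) Filter.atTop (nhds 1))
    (hBlim : Filter.Tendsto B Filter.atTop Filter.atTop)
    (hAb : ∀ t ∈ Set.Ici (0:ℝ),
      HasDerivWithinAt Ab (Bb t / Cb t + Cb t / Bb t + 2) (Set.Ici 0) t)
    (hBb : ∀ t ∈ Set.Ici (0:ℝ),
      HasDerivWithinAt Bb (Cb t / Ab t + Db t / Cb t - (Bb t) ^ 2 / (Ab t * Cb t)) (Set.Ici 0) t)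
    (hCb : ∀ t ∈ Set.Ici (0:ℝ),
      HasDerivWithinAt Cb (Bb t / Ab t + Db t / Bb t - (Cb t) ^ 2 / (Ab t * Bb t)) (Set.Ici 0) t)
    (hDb : ∀ t ∈ Set.Ici (0:ℝ),
      HasDerivWithinAt Db (-(Db t) ^ 2 / (Bb t * Cb t)) (Set.Ici 0) t)
    (hAb0 : Ab 0 = m1) (hBb0 : Bb 0 = m2) (hCb0 : Cb 0 = m3) (hDb0 : Db 0 = m4)
    (hAblim : Filter.Tendsto (fun t => Ab t / t) Filter.atTop (nhds 4))
    (hBbClim : Filter.Tendsto (fun t => Bb t / Cb t) Filter.atTop (nhds 1))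
    (hBblim : Filter.Tendsto Bb Filter.atTop Filter.atTop) :
    Filter.Tendsto (fun t : ℝ =>
        ((A t - Ab t - a ^ 2 * Bb t - b ^ 2 * Cb t - c ^ 2 * Db t) / A t) ^ 2 +
        ((B t - Bb t - a ^ 2 * Db t) / B t) ^ 2 +
        ((C t - Cb t - b ^ 2 * Db t) / C t) ^ 2 +
        ((D t - Db t) / D t) ^ 2 +
        2 * (a * Bb t - a * c * Db t) ^ 2 / (A t * B t) +
        2 * (b * Cb t + b * c * Db t) ^ 2 / (A t * C t) +
        2 * (c * Db t) ^ 2 / (A t * D t) +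
        2 * (a * b * Db t) ^ 2 / (B t * C t) +
        2 * (a * Db t) ^ 2 / (B t * D t) +
        2 * (b * Db t) ^ 2 / (C t * D t))
      Filter.atTop (nhds 0) ↔ m2 * m3 * m4 ^ 2 = l2 * l3 * l4 ^ 2 :=
  stmt_10_general l2 l3 l4 m2 m3 m4 a b c A B C D Ab Bb Cb Db hApos hBpos hCpos hDpos hBbpos hCbpos
    hDbpos hB hC hD hB0 hC0 hD0 hAlim hBClim hBb hCb hDb hBb0 hCb0 hDb0 hAblim hBbClim
end

section
/- Let a₂ ∈ (-1,1), let λ₁,λ₂,λ₄ and λ̄₁,λ̄₂,λ̄₄ be positive reals, and set λ₃ = λ₂/(1-a₂²), λ̄₃ = λ̄₂/(1-a₂²). For t ≥ 0 define A(t)=λ₁+4t, B(t)=(λ₂³+3(1-a₂²)λ₂λ₄t)^{1/3}, C(t)=B(t)/(1-a₂²), D(t)=λ₂λ₄(λ₂³+3(1-a₂²)λ₂λ₄t)^{-1/3}, and define Ā,B̄,C̄,D̄ by the same formulas with λ̄ᵢ in place of λᵢ. Then ((A-Ā)/A)² + ((B-B̄)/B)² + ((C-C̄)/C)² + ((D-D̄)/D)²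 tends to 0 as t → ∞ if and only if λ̄₂λ̄₄ = λ₂λ₄; in particular λ̄₁ and λ̄₂ may be chosen arbitrarily and then λ̄₃, λ̄₄ are determined, so the quasi-convergence class [g]_α is exactly a 2-parameter family. -/
/-!
Along the flow the two metrics have relative errors whose limits are explicit: the `A`-term
tends to `0`, the `B`- and `C`-terms to `1 - r^{1/3}` and the `D`-term to `1 - r · r^{-1/3}`,
where `r = λ̄₂λ̄₄ / (λ₂λ₄)` is the ratio of the growth rates of the cubes `B³` and `B̄³`.
The sum of the squares of these limits vanishes exactly when `r = 1`.
-/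

open Filter Topology

lemma eventually_pos_affine_atTop (a : ℝ) {k : ℝ} (hk : 0 < k) :
    ∀ᶠ t in atTop, 0 < a + k * t :=
  (tendsto_atTop_add_const_left atTop a (tendsto_id.const_mul_atTop hk)).eventually_gt_atTop 0

lemma tendsto_affine_div_affine_atTop (a b k' : ℝ) {k : ℝ} (hk : k ≠ 0) :
    Tendsto (fun t : ℝ => (b + k' * t) / (a + k * t)) atTop (𝓝 (k' / k)) := by
  have hnum : Tendsto (fun t : ℝ => b / t + k') atTop (𝓝 (0 + k')) :=
    (tendsto_const_nhds.div_atTop tendsto_id).add tendsto_const_nhds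
  have hden : Tendsto (fun t : ℝ => a / t + k) atTop (𝓝 (0 + k)) :=
    (tendsto_const_nhds.div_atTop tendsto_id).add tendsto_const_nhds
  rw [zero_add] at hnum hden
  refine (hnum.div hden hk).congr' ?_
  filter_upwards [eventually_ne_atTop (0 : ℝ)] with t ht
  simp only [Pi.div_apply]
  field_simp

lemma tendsto_rpow_affine_div_rpow_affine_atTop (a b p : ℝ) {k k' : ℝ} (hk : 0 < k)
    (hk' : 0 < k') :
    Tendsto (fun t : ℝ => (b + k' * t) ^ p / (a + k * t) ^ p) atTop (𝓝 ((k' / k) ^ p)) := by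
  refine ((tendsto_affine_div_affine_atTop a b k' hk.ne').rpow_const
    (Or.inl (div_pos hk' hk).ne')).congr' ?_
  filter_upwards [eventually_pos_affine_atTop a hk, eventually_pos_affine_atTop b hk']
    with t hx hy
  exact Real.div_rpow hy.le hx.le p

lemma Filter.Tendsto.sub_div_self {α : Type*} {l : Filter α} {f g : α → ℝ} {c : ℝ}
    (h : Tendsto (fun x => g x / f x) l (𝓝 c)) (hf : ∀ᶠ x in l, f x ≠ 0) :
    Tendsto (fun x => (f x - g x) / f x) l (𝓝 (1 - c)) := by
  refine (tendsto_const_nhds.sub h).congr' ?_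
  filter_upwards [hf] with x hx
  rw [sub_div, div_self hx]

lemma sum_sq_one_sub_rpow_eq_zero_iff {r : ℝ} (hr : 0 < r) :
    (1 - r ^ ((1 : ℝ) / 3)) ^ 2 + (1 - r ^ ((1 : ℝ) / 3)) ^ 2
      + (1 - r * r ^ (-(1 : ℝ) / 3)) ^ 2 = 0 ↔ r = 1 := by
  constructor
  · intro h
    have hcube : (r ^ ((1 : ℝ) / 3)) ^ 3 = r := by
      simpa [one_div] using Real.rpow_inv_natCast_pow hr.le (n := 3) three_ne_zero
    have hroot : r ^ ((1 : ℝ) / 3) = 1 := by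
      nlinarith [sq_nonneg (1 - r ^ ((1 : ℝ) / 3)), sq_nonneg (1 - r * r ^ (-(1 : ℝ) / 3))]
    rw [← hcube, hroot, one_pow]
  · rintro rfl
    norm_num

theorem stmt_11_general (a2 : ℝ) (ha2l : -1 < a2) (ha2r : a2 < 1)
    (l1 l2 l4 m1 m2 m4 : ℝ)
    (hl2 : 0 < l2) (hl4 : 0 < l4)
    (hm2 : 0 < m2) (hm4 : 0 < m4)
    (A B C D Ab Bb Cb Db : ℝ → ℝ)
    (hA : ∀ t : ℝ, A t = l1 + 4 * t)
    (hB : ∀ t : ℝ, B t = (l2 ^ 3 + 3 * (1 - a2 ^ 2) * l2 * l4 * t) ^ ((1:ℝ)/3))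
    (hC : ∀ t : ℝ, C t = B t / (1 - a2 ^ 2))
    (hD : ∀ t : ℝ, D t = l2 * l4 * (l2 ^ 3 + 3 * (1 - a2 ^ 2) * l2 * l4 * t) ^ (-(1:ℝ)/3))
    (hAb : ∀ t : ℝ, Ab t = m1 + 4 * t)
    (hBb : ∀ t : ℝ, Bb t = (m2 ^ 3 + 3 * (1 - a2 ^ 2) * m2 * m4 * t) ^ ((1:ℝ)/3))
    (hCb : ∀ t : ℝ, Cb t = Bb t / (1 - a2 ^ 2))
    (hDb : ∀ t : ℝ, Db t = m2 * m4 * (m2 ^ 3 + 3 * (1 - a2 ^ 2) * m2 * m4 * t) ^ (-(1:ℝ)/3)) :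
    Filter.Tendsto (fun t : ℝ =>
        ((A t - Ab t) / A t) ^ 2 + ((B t - Bb t) / B t) ^ 2 +
        ((C t - Cb t) / C t) ^ 2 + ((D t - Db t) / D t) ^ 2)
      Filter.atTop (nhds 0) ↔ m2 * m4 = l2 * l4 := by
  have ha : 0 < 1 - a2 ^ 2 := by nlinarith
  set k := 3 * (1 - a2 ^ 2) * l2 * l4
  set k' := 3 * (1 - a2 ^ 2) * m2 * m4
  have hk : 0 < k := by positivity
  have hk' : 0 < k' := by positivity
  have hr : k' / k = m2 * m4 / (l2 * l4) := by
    rw [div_eq_div_iff hk.ne' (by positivity)]; ring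
  set r := m2 * m4 / (l2 * l4)
  have errA : Tendsto (fun t => (A t - Ab t) / A t) atTop (𝓝 (1 - 4 / 4)) := by
    refine Tendsto.sub_div_self ?_ ?_
    · simpa only [hA, hAb] using tendsto_affine_div_affine_atTop l1 m1 4 four_ne_zero
    · filter_upwards [eventually_pos_affine_atTop l1 four_pos] with t ht
      rw [hA]; exact ht.ne'
  have errB : Tendsto (fun t => (B t - Bb t) / B t) atTop (𝓝 (1 - r ^ ((1 : ℝ) / 3))) := by
    refine Tendsto.sub_div_self ?_ ?_
    · simpa only [hB, hBb, hr] using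
        tendsto_rpow_affine_div_rpow_affine_atTop (l2 ^ 3) (m2 ^ 3) _ hk hk'
    · filter_upwards [eventually_pos_affine_atTop (l2 ^ 3) hk] with t hx
      rw [hB]; exact (Real.rpow_pos_of_pos hx _).ne'
  have errC : Tendsto (fun t => (C t - Cb t) / C t) atTop (𝓝 (1 - r ^ ((1 : ℝ) / 3))) :=
    errB.congr fun t => by rw [hC, hCb, ← sub_div, div_div_div_cancel_right₀ ha.ne']
  have errD : Tendsto (fun t => (D t - Db t) / D t) atTop
      (𝓝 (1 - r * r ^ (-(1 : ℝ) / 3))) := by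
    refine Tendsto.sub_div_self ?_ ?_
    · have := (tendsto_rpow_affine_div_rpow_affine_atTop (l2 ^ 3) (m2 ^ 3) (-(1 : ℝ) / 3) hk
        hk').const_mul r
      rw [hr] at this
      exact this.congr fun t => by rw [hD, hDb, mul_div_mul_comm]
    · filter_upwards [eventually_pos_affine_atTop (l2 ^ 3) hk] with t hx
      rw [hD]; exact (mul_pos (by positivity) (Real.rpow_pos_of_pos hx _)).ne'
  have errSum := (((errA.pow 2).add (errB.pow 2)).add (errC.pow 2)).add (errD.pow 2)
  rw [div_self four_ne_zero, sub_self, zero_pow two_ne_zero, zero_add] at errSum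
  rw [← div_eq_one_iff_eq (by positivity), ← sum_sq_one_sub_rpow_eq_zero_iff (by positivity)]
  exact ⟨fun h => tendsto_nhds_unique errSum h, fun h => h ▸ errSum⟩

/-- class A7ii: quasi-convergence of diagonal metrics in the same
frame holds iff `λ̄₂λ̄₄ = λ₂λ₄`; `[g]_α` is a 2-parameter family. -/
theorem stmt_11 (a2 : ℝ) (ha2l : -1 < a2) (ha2r : a2 < 1)
    (l1 l2 l4 m1 m2 m4 l3 m3 : ℝ)
    (hl1 : 0 < l1) (hl2 : 0 < l2) (hl4 : 0 < l4)
    (hm1 : 0 < m1) (hm2 : 0 < m2) (hm4 : 0 < m4)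
    (hl3 : l3 = l2 / (1 - a2 ^ 2)) (hm3 : m3 = m2 / (1 - a2 ^ 2))
    (A B C D Ab Bb Cb Db : ℝ → ℝ)
    (hA : ∀ t : ℝ, A t = l1 + 4 * t)
    (hB : ∀ t : ℝ, B t = (l2 ^ 3 + 3 * (1 - a2 ^ 2) * l2 * l4 * t) ^ ((1:ℝ)/3))
    (hC : ∀ t : ℝ, C t = B t / (1 - a2 ^ 2))
    (hD : ∀ t : ℝ, D t = l2 * l4 * (l2 ^ 3 + 3 * (1 - a2 ^ 2) * l2 * l4 * t) ^ (-(1:ℝ)/3))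
    (hAb : ∀ t : ℝ, Ab t = m1 + 4 * t)
    (hBb : ∀ t : ℝ, Bb t = (m2 ^ 3 + 3 * (1 - a2 ^ 2) * m2 * m4 * t) ^ ((1:ℝ)/3))
    (hCb : ∀ t : ℝ, Cb t = Bb t / (1 - a2 ^ 2))
    (hDb : ∀ t : ℝ, Db t = m2 * m4 * (m2 ^ 3 + 3 * (1 - a2 ^ 2) * m2 * m4 * t) ^ (-(1:ℝ)/3)) :
    Filter.Tendsto (fun t : ℝ =>
        ((A t - Ab t) / A t) ^ 2 + ((B t - Bb t) / B t) ^ 2 +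
        ((C t - Cb t) / C t) ^ 2 + ((D t - Db t) / D t) ^ 2)
      Filter.atTop (nhds 0) ↔ m2 * m4 = l2 * l4 :=
  stmt_11_general a2 ha2l ha2r l1 l2 l4 m1 m2 m4 hl2 hl4 hm2 hm4 A B C D Ab Bb Cb Db hA hB hC hD hAb
    hBb hCb hDb
end
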